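/- arXiv:1509.05097 — 8 statements merged into one kernel-verified Lean document; each statement's English description precedes it below -/
import Mathlib

section
/- Let α : ℝ → ℝ be measurable, odd (α(−s) = −α(s)), integrable, and compactly supported, with first moment α₁ := ∫_ℝ s·α(s) ds satisfying α₁ > 0, and set |α|₂ := ∫_ℝ s²·|α(s)| ds. For ε > 0 set α_ε(s) := α(s/ε)/(ε²·α₁) and D_{α,ε}ψ(t) := ∫_ℝ α_ε(s−t)·ψ(s) ds. Then for every twice continuously differentiable ψ : ℝ → ℝ whose second derivative is bounded, for every ε > 0 and every t ∈ ℝ: |D_{α,ε}ψ(t) − ψ′(t)| ≤ (|α|₂/(2·α₁))·ε·(sup_{x∈ℝ} |ψ″(x)|). -/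
/-!
Substituting `s = t + ε u` turns the nonlocal derivative into `(ε α₁)⁻¹ ∫ ψ(t + ε u) α(u) du`.
Since `α` is odd, `∫ α = 0`, and `∫ u α(u) du = α₁`, so the first-order Taylor polynomial of `ψ`
at `t` can be subtracted inside the integral at no cost, leaving exactly `ψ′(t)` outside:
`D_{α,ε}ψ(t) - ψ′(t) = (ε α₁)⁻¹ ∫ (ψ(t + ε u) - ψ(t) - ε u ψ′(t)) α(u) du`.
The Taylor remainder is at most `sup |ψ″| (ε u)² / 2`, and integrating against `|α|` gives the
second absolute moment.
-/

open MeasureTheory Real Set Filter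

lemma abs_sub_sub_mul_deriv_le_of_abs_deriv_deriv_le {f : ℝ → ℝ} (hf : ContDiff ℝ 2 f) {M : ℝ}
    (hM : ∀ x, |deriv (deriv f) x| ≤ M) (a b : ℝ) :
    |f b - f a - (b - a) * deriv f a| ≤ M / 2 * (b - a) ^ 2 := by
  rcases eq_or_ne a b with rfl | hab
  · simp
  obtain ⟨c, -, hc⟩ := taylor_mean_remainder_lagrange_iteratedDeriv (n := 1) hab hf.contDiffOn
  have hderiv : derivWithin f (uIcc a b) a = deriv f a :=
    (hf.differentiable two_ne_zero a).derivWithin (uniqueDiffOn_uIcc hab a left_mem_uIcc)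
  norm_num [taylorWithinEval_succ, iteratedDeriv_succ, hderiv] at hc
  rw [sub_sub, hc, abs_div, abs_mul, abs_sq, abs_two, div_mul_eq_mul_div]
  gcongr
  exact hM c

theorem Function.Odd.integral_eq_zero {G E : Type*} [MeasurableSpace G] [AddGroup G]
    [MeasurableNeg G] [NormedAddCommGroup E] [NormedSpace ℝ E] (μ : Measure G) [μ.IsNegInvariant]
    {f : G → E} (hf : Function.Odd f) : ∫ x, f x ∂μ = 0 := by
  have h := integral_neg_eq_self f μ
  simp only [hf _, integral_neg] at h
  have : (2 : ℝ) • ∫ x, f x ∂μ = 0 := by rw [two_smul]; nth_rw 1 [← h]; exact neg_add_cancel _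
  exact (smul_eq_zero.mp this).resolve_left two_ne_zero

theorem MeasureTheory.Integrable.continuous_mul_of_hasCompactSupport {X : Type*}
    [TopologicalSpace X] [T2Space X] [MeasurableSpace X] [OpensMeasurableSpace X] {μ : Measure X}
    {f g : X → ℝ} (hf : Integrable f μ) (hsupp : HasCompactSupport f) (hg : Continuous g) :
    Integrable (fun x => g x * f x) μ :=
  (integrableOn_iff_integrable_of_support_subset
    ((Function.support_mul_subset_right g f).trans (subset_tsupport f))).mp
    (IntegrableOn.continuousOn_mul hg.continuousOn hf.integrableOn hsupp)

theorem integral_comp_sub_div {E : Type*} [NormedAddCommGroup E] [NormedSpace ℝ E]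
    (F : ℝ → E) (t ε : ℝ) : ∫ s, F ((s - t) / ε) = |ε| • ∫ u, F u := by
  rw [integral_sub_right_eq_self (fun s => F (s / ε)) t, Measure.integral_comp_div]

section Kernel

variable {α : ℝ → ℝ}

theorem nonlocal_deriv_sub_eq_integral_remainder (hint : Integrable α) (hsupp : HasCompactSupport α)
    (hodd : Function.Odd α) {α₁ : ℝ} (hα₁ : α₁ = ∫ s, s * α s) (hα₁0 : α₁ ≠ 0)
    {ψ : ℝ → ℝ} (hψ : Continuous ψ) {ε : ℝ} (hε : 0 < ε) (t c : ℝ) :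
    (∫ s, α ((s - t) / ε) / (ε ^ 2 * α₁) * ψ s) - c =
      (∫ u, (ψ (t + ε * u) - ψ t - ε * u * c) * α u) / (ε * α₁) := by
  have hcov : ∫ s, α ((s - t) / ε) / (ε ^ 2 * α₁) * ψ s =
      (∫ u, ψ (t + ε * u) * α u) / (ε * α₁) := by
    have hsubst : ∀ s, t + ε * ((s - t) / ε) = s := fun s => by field_simp; ring
    calc ∫ s, α ((s - t) / ε) / (ε ^ 2 * α₁) * ψ s
        = ∫ s, ψ (t + ε * ((s - t) / ε)) * α ((s - t) / ε) / (ε ^ 2 * α₁) := by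
          simp only [hsubst]; congr 1; ext s; ring
      _ = (∫ u, ψ (t + ε * u) * α u) / (ε * α₁) := by
          rw [integral_comp_sub_div (fun u => ψ (t + ε * u) * α u / (ε ^ 2 * α₁)),
            abs_of_pos hε, integral_div, smul_eq_mul]
          field_simp
  have hψα : Integrable (fun u => ψ (t + ε * u) * α u) :=
    hint.continuous_mul_of_hasCompactSupport hsupp (by fun_prop)
  have hmoment : Integrable (fun u => u * α u) :=
    hint.continuous_mul_of_hasCompactSupport hsupp continuous_id
  have hsplit : ∫ u, (ψ (t + ε * u) - ψ t - ε * u * c) * α u =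
      (∫ u, ψ (t + ε * u) * α u) - ψ t * (∫ u, α u) - ε * c * ∫ u, u * α u := by
    have hexpand : (fun u => (ψ (t + ε * u) - ψ t - ε * u * c) * α u) =
        fun u => (ψ (t + ε * u) * α u - ψ t * α u) - ε * c * (u * α u) := by
      ext u; ring
    rw [hexpand, integral_sub, integral_sub, integral_const_mul, integral_const_mul]
    exacts [hψα, hint.const_mul _, hψα.sub (hint.const_mul _), hmoment.const_mul _]
  have hmass : ∫ u, α u = 0 := hodd.integral_eq_zero volume
  rw [hcov, hsplit, hmass, ← hα₁]
  field_simp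
  ring

theorem abs_integral_mul_le_of_abs_le_mul_sq (hint : Integrable α) (hsupp : HasCompactSupport α)
    {r : ℝ → ℝ} {C : ℝ} (hr : ∀ u, |r u| ≤ C * u ^ 2) :
    |∫ u, r u * α u| ≤ C * ∫ u, u ^ 2 * |α u| := by
  rw [← integral_const_mul (μ := volume) C, ← Real.norm_eq_abs]
  refine norm_integral_le_of_norm_le
    ((hint.abs.continuous_mul_of_hasCompactSupport hsupp.abs (continuous_pow 2)).const_mul C)
    (Eventually.of_forall fun u => ?_)
  rw [norm_mul, Real.norm_eq_abs, Real.norm_eq_abs, ← mul_assoc]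
  exact mul_le_mul_of_nonneg_right (hr u) (abs_nonneg _)

end Kernel

theorem stmt_0_general (α : ℝ → ℝ)
    (hodd : ∀ s, α (-s) = -α s)
    (hint : Integrable α) (hsupp : HasCompactSupport α)
    (α₁ : ℝ) (hα₁ : α₁ = ∫ s, s * α s) (hα₁pos : 0 < α₁)
    (αabs2 : ℝ) (hαabs2 : αabs2 = ∫ s, s ^ 2 * |α s|)
    (ψ : ℝ → ℝ) (hψ : ContDiff ℝ 2 ψ)
    (hbdd : BddAbove (Set.range fun x => |deriv (deriv ψ) x|))
    (ε : ℝ) (hε : 0 < ε) (t : ℝ) :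
    |(∫ s, α ((s - t) / ε) / (ε ^ 2 * α₁) * ψ s) - deriv ψ t| ≤
      (αabs2 / (2 * α₁)) * ε * (⨆ x, |deriv (deriv ψ) x|) := by
  set M := ⨆ x, |deriv (deriv ψ) x|
  have hM : ∀ x, |deriv (deriv ψ) x| ≤ M := le_ciSup hbdd
  have hεα₁ : 0 < ε * α₁ := mul_pos hε hα₁pos
  have hremainder :
      ∀ u, |ψ (t + ε * u) - ψ t - ε * u * deriv ψ t| ≤ M / 2 * ε ^ 2 * u ^ 2 := fun u => by
    simpa [mul_pow, mul_assoc] using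
      abs_sub_sub_mul_deriv_le_of_abs_deriv_deriv_le hψ hM t (t + ε * u)
  rw [nonlocal_deriv_sub_eq_integral_remainder hint hsupp hodd hα₁ hα₁pos.ne' hψ.continuous hε,
    abs_div, abs_of_pos hεα₁, div_le_iff₀ hεα₁]
  calc _ ≤ M / 2 * ε ^ 2 * αabs2 :=
        hαabs2 ▸ abs_integral_mul_le_of_abs_le_mul_sq hint hsupp hremainder
    _ = αabs2 / (2 * α₁) * ε * M * (ε * α₁) := by field_simp

/-- quantitative strong convergence of the nonlocal derivative on
twice continuously differentiable functions with bounded second derivative. -/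
theorem stmt_0 (α : ℝ → ℝ) (hmeas : Measurable α)
    (hodd : ∀ s, α (-s) = -α s)
    (hint : Integrable α) (hsupp : HasCompactSupport α)
    (α₁ : ℝ) (hα₁ : α₁ = ∫ s, s * α s) (hα₁pos : 0 < α₁)
    (αabs2 : ℝ) (hαabs2 : αabs2 = ∫ s, s ^ 2 * |α s|)
    (ψ : ℝ → ℝ) (hψ : ContDiff ℝ 2 ψ)
    (hbdd : BddAbove (Set.range fun x => |deriv (deriv ψ) x|))
    (ε : ℝ) (hε : 0 < ε) (t : ℝ) :
    |(∫ s, α ((s - t) / ε) / (ε ^ 2 * α₁) * ψ s) - deriv ψ t| ≤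
      (αabs2 / (2 * α₁)) * ε * (⨆ x, |deriv (deriv ψ) x|) :=
  stmt_0_general α hodd hint hsupp α₁ hα₁ hα₁pos αabs2 hαabs2 ψ hψ hbdd ε hε t
end

section
/- Let α : ℝ → ℝ be measurable, odd, integrable, compactly supported, with α₁ := ∫_ℝ s·α(s) ds > 0, and let u : ℝ → ℂ be locally integrable. Then for every infinitely differentiable compactly supported ψ : ℝ → ℂ, the integrals ∫_ℝ u(t)·D_{α,ε}ψ(t) dt converge to ∫_ℝ u(t)·ψ′(t) dt as ε → 0⁺ (limit taken over ε ∈ (0,1]). (This expresses the weak convergence D_{α,ε}u ⇀ u′ of the nonlocal derivative to the classical derivative, via the skew-adjointness of D_{α,ε}.) -/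
open MeasureTheory Real Set Filter

/-- weak convergence of the nonlocal derivative of a locally
integrable (distributional) `u` to the classical derivative, tested against
smooth compactly supported test functions via skew-adjointness. -/
theorem stmt_1 (α : ℝ → ℝ) (hmeas : Measurable α)
    (hodd : ∀ s, α (-s) = -α s)
    (hint : Integrable α) (hsupp : HasCompactSupport α)
    (α₁ : ℝ) (hα₁ : α₁ = ∫ s, s * α s) (hα₁pos : 0 < α₁)
    (u : ℝ → ℂ) (hu : LocallyIntegrable u)
    (ψ : ℝ → ℂ) (hψ : ContDiff ℝ (⊤ : ℕ∞) ψ) (hψsupp : HasCompactSupport ψ) :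
    Tendsto (fun ε : ℝ =>
        ∫ t, u t * ∫ s, ((α ((s - t) / ε) / (ε ^ 2 * α₁) : ℝ) : ℂ) * ψ s)
      (nhdsWithin 0 (Set.Ioc 0 1)) (nhds (∫ t, u t * deriv ψ t)) := by
  have hψc : Continuous ψ := hψ.continuous
  obtain ⟨R, hR⟩ := hsupp.isCompact.isBounded.subset_closedBall 0
  obtain ⟨M, hM⟩ := hψsupp.isCompact.isBounded.subset_closedBall 0
  obtain ⟨L, hL⟩ := hψ.lipschitzWith_of_hasCompactSupport hψsupp (by simp)
  obtain ⟨Cψ, hCψ0⟩ := (hψc.norm).bounded_above_of_compact_support hψsupp.norm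
  have hCψ : ∀ x, ‖ψ x‖ ≤ Cψ := fun x => by simpa using hCψ0 x
  -- |r| ≤ R on the support of α
  have habs : ∀ r : ℝ, α r ≠ 0 → |r| ≤ R := by
    intro r hr
    have h := hR (subset_tsupport α hr)
    simpa [Real.dist_eq] using h
  -- the integral of an odd function vanishes
  have hα0 : (∫ r, α r) = 0 := by
    have h1 : (∫ r : ℝ, α (-r)) = ∫ r, α r := integral_neg_eq_self α volume
    simp only [hodd] at h1
    rw [integral_neg] at h1
    linarith
  -- r * α r is integrable
  have hxα : Integrable (fun r : ℝ => r * α r) := by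
    refine (hint.norm.const_mul R).mono'
      ((measurable_id.mul hmeas).aestronglyMeasurable) ?_
    filter_upwards with r
    by_cases h : α r = 0
    · simp [h]
    · rw [Real.norm_eq_abs, abs_mul, Real.norm_eq_abs]
      exact mul_le_mul_of_nonneg_right (habs r h) (abs_nonneg _)
  set T : ℝ := ∫ r, |r * α r| with hTdef
  have hT : 0 ≤ T := integral_nonneg fun r => abs_nonneg _
  -- basic integrability for the rescaled integrand
  have hInt1 : ∀ (ε t : ℝ), Integrable (fun r => α r • ψ (t + ε * r)) := by
    intro ε t
    refine (hint.norm.mul_const Cψ).mono'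
      (hmeas.aestronglyMeasurable.smul
        ((hψc.comp (continuous_const.add (continuous_const.mul continuous_id))).aestronglyMeasurable)) ?_
    filter_upwards with r
    rw [norm_smul]
    exact mul_le_mul_of_nonneg_left (hCψ _) (norm_nonneg _)
  -- change of variables
  have key : ∀ ε : ℝ, 0 < ε → ∀ t : ℝ,
      (∫ s, ((α ((s - t) / ε) / (ε ^ 2 * α₁) : ℝ) : ℂ) * ψ s)
        = (ε * α₁)⁻¹ • ∫ r, α r • ψ (t + ε * r) := by
    intro ε hε t
    have hne : ε ≠ 0 := hε.ne'
    set g : ℝ → ℂ := fun s => ((α ((s - t) / ε) / (ε ^ 2 * α₁) : ℝ) : ℂ) * ψ s with hg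
    have h2 : ∀ x : ℝ, g (ε * x + t) = (ε ^ 2 * α₁)⁻¹ • (α x • ψ (t + ε * x)) := by
      intro x
      have hx : (ε * x + t - t) / ε = x := by field_simp; ring
      show ((α ((ε * x + t - t) / ε) / (ε ^ 2 * α₁) : ℝ) : ℂ) * ψ (ε * x + t) = _
      rw [hx, ← Complex.real_smul, smul_smul]
      have e1 : α x / (ε ^ 2 * α₁) = (ε ^ 2 * α₁)⁻¹ * α x := by ring
      have e2 : ε * x + t = t + ε * x := by ring
      rw [e1, e2]
    have h1 : (∫ x : ℝ, g (ε * x + t)) = |ε⁻¹| • ∫ s, g s := by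
      have h := Measure.integral_comp_mul_left (fun y => g (y + t)) ε
      rw [integral_add_right_eq_self g t] at h
      exact h
    have h3 : (∫ x : ℝ, g (ε * x + t)) = (ε ^ 2 * α₁)⁻¹ • ∫ x, α x • ψ (t + ε * x) := by
      simp_rw [h2]
      exact integral_smul _ _
    have h4 : (∫ s, g s) = ε • ∫ x : ℝ, g (ε * x + t) := by
      rw [h1, smul_smul, abs_inv, abs_of_pos hε, mul_inv_cancel₀ hne, one_smul]
    rw [show (∫ s, ((α ((s - t) / ε) / (ε ^ 2 * α₁) : ℝ) : ℂ) * ψ s) = ∫ s, g s from rfl,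
      h4, h3, smul_smul]
    congr 1
    field_simp
  -- drop the constant term using oddness
  have key2 : ∀ (ε t : ℝ),
      (∫ r, α r • (ψ (t + ε * r) - ψ t)) = ∫ r, α r • ψ (t + ε * r) := by
    intro ε t
    rw [show (fun r => α r • (ψ (t + ε * r) - ψ t))
        = fun r => α r • ψ (t + ε * r) - α r • ψ t from funext fun r => smul_sub _ _ _]
    rw [integral_sub (hInt1 ε t) (hint.smul_const (ψ t)), integral_smul_const, hα0,
      zero_smul, sub_zero]
  -- Lipschitz bound
  have hdbound : ∀ (ε t r : ℝ), 0 < ε → ‖ψ (t + ε * r) - ψ t‖ ≤ (L : ℝ) * (ε * |r|) := by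
    intro ε t r hε
    have h := hL.dist_le_mul (t + ε * r) t
    rw [dist_eq_norm, dist_eq_norm] at h
    simpa [abs_mul, abs_of_pos hε] using h
  -- pointwise convergence of the inner integral
  have hlim : ∀ t : ℝ, Tendsto (fun ε : ℝ => (ε * α₁)⁻¹ • ∫ r, α r • (ψ (t + ε * r) - ψ t))
      (nhdsWithin 0 (Set.Ioc 0 1)) (nhds (deriv ψ t)) := by
    intro t
    have hslope : ∀ r : ℝ, Tendsto (fun ε : ℝ => α r • (ε⁻¹ • (ψ (t + ε * r) - ψ t)))
        (nhdsWithin 0 (Set.Ioc 0 1)) (nhds (α r • (r • deriv ψ t))) := by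
      intro r
      have hd : HasDerivAt (fun ε : ℝ => ψ (t + ε * r)) (r • deriv ψ t) 0 := by
        have h1 : HasDerivAt (fun ε : ℝ => t + ε * r) r 0 := by
          simpa using ((hasDerivAt_id (0 : ℝ)).mul_const r).const_add t
        have h2 : HasDerivAt ψ (deriv ψ (t + 0 * r)) (t + 0 * r) := by
          simpa using (hψ.differentiable (by simp) (t + 0 * r)).hasDerivAt
        have := h2.scomp 0 h1
        simp only [zero_mul, add_zero] at this
        exact this
      have hs := hasDerivAt_iff_tendsto_slope.mp hd
      have h3 : Tendsto (fun ε : ℝ => ε⁻¹ • (ψ (t + ε * r) - ψ t))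
          (nhdsWithin 0 (Set.Ioc 0 1)) (nhds (r • deriv ψ t)) := by
        refine (hs.mono_left (nhdsWithin_mono 0 fun x hx => ne_of_gt hx.1)).congr fun ε => ?_
        simp [slope_def_module]
      exact h3.const_smul (α r)
    have hin : Tendsto (fun ε : ℝ => ∫ r, α r • (ε⁻¹ • (ψ (t + ε * r) - ψ t)))
        (nhdsWithin 0 (Set.Ioc 0 1)) (nhds (∫ r, α r • (r • deriv ψ t))) := by
      refine tendsto_integral_filter_of_dominated_convergence
        (fun r => (L : ℝ) * |r * α r|) ?_ ?_ ?_ ?_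
      · refine eventually_nhdsWithin_of_forall fun ε hε => ?_
        exact hmeas.aestronglyMeasurable.smul
          ((((hψc.comp (continuous_const.add (continuous_const.mul continuous_id))).sub
            continuous_const).const_smul ε⁻¹).aestronglyMeasurable)
      · refine eventually_nhdsWithin_of_forall fun ε hε => ae_of_all _ fun r => ?_
        show ‖α r • (ε⁻¹ • (ψ (t + ε * r) - ψ t))‖ ≤ (L : ℝ) * |r * α r|
        rw [norm_smul, norm_smul, Real.norm_eq_abs, Real.norm_eq_abs,
          abs_of_pos (inv_pos.mpr hε.1)]
        have step : |α r| * (ε⁻¹ * ‖ψ (t + ε * r) - ψ t‖)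
            ≤ |α r| * (ε⁻¹ * ((L : ℝ) * (ε * |r|))) := by
          gcongr
          · exact inv_nonneg.mpr hε.1.le
          · exact hdbound ε t r hε.1
        refine step.trans (le_of_eq ?_)
        rw [abs_mul]
        field_simp [hε.1.ne']
      · exact hxα.norm.const_mul (L : ℝ)
      · exact ae_of_all _ hslope
    have hval : (∫ r, α r • (r • deriv ψ t)) = α₁ • deriv ψ t := by
      simp_rw [smul_smul]
      rw [integral_smul_const]
      congr 1
      rw [hα₁]
      exact integral_congr_ae (ae_of_all _ fun r => mul_comm _ _)
    have hmain : Tendsto (fun ε : ℝ => α₁⁻¹ • ∫ r, α r • (ε⁻¹ • (ψ (t + ε * r) - ψ t)))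
        (nhdsWithin 0 (Set.Ioc 0 1)) (nhds (deriv ψ t)) := by
      have h := hin.const_smul α₁⁻¹
      rw [hval, smul_smul, inv_mul_cancel₀ hα₁pos.ne', one_smul] at h
      exact h
    refine Filter.Tendsto.congr' ?_ hmain
    refine eventually_nhdsWithin_of_forall fun ε hε => ?_
    show α₁⁻¹ • (∫ r, α r • (ε⁻¹ • (ψ (t + ε * r) - ψ t)))
        = (ε * α₁)⁻¹ • ∫ r, α r • (ψ (t + ε * r) - ψ t)
    rw [show (fun r => α r • (ε⁻¹ • (ψ (t + ε * r) - ψ t)))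
        = fun r => ε⁻¹ • (α r • (ψ (t + ε * r) - ψ t)) from funext fun r => smul_comm _ _ _]
    rw [integral_smul, smul_smul]
    congr 1
    rw [mul_inv]
    ring
  -- uniform bound on the inner integral
  have hC : ∀ ε ∈ Set.Ioc (0:ℝ) 1, ∀ t : ℝ,
      ‖(ε * α₁)⁻¹ • ∫ r, α r • (ψ (t + ε * r) - ψ t)‖ ≤ α₁⁻¹ * ((L : ℝ) * T) := by
    intro ε hε t
    have hε' := hε.1
    have h1 : ‖∫ r, α r • (ψ (t + ε * r) - ψ t)‖ ≤ ((L : ℝ) * ε) * T := by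
      have hgint : Integrable (fun r : ℝ => ((L : ℝ) * ε) * |r * α r|) :=
        hxα.norm.const_mul ((L : ℝ) * ε)
      refine (norm_integral_le_integral_norm _).trans ?_
      have hmono : (∫ r, ‖α r • (ψ (t + ε * r) - ψ t)‖)
          ≤ ∫ r, ((L : ℝ) * ε) * |r * α r| := by
        refine integral_mono_of_nonneg (ae_of_all _ fun r => norm_nonneg _) hgint
          (ae_of_all _ fun r => ?_)
        show ‖α r • (ψ (t + ε * r) - ψ t)‖ ≤ ((L : ℝ) * ε) * |r * α r|
        rw [norm_smul, Real.norm_eq_abs]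
        calc |α r| * ‖ψ (t + ε * r) - ψ t‖
            ≤ |α r| * ((L : ℝ) * (ε * |r|)) := by
              gcongr
              exact hdbound ε t r hε'

          _ = ((L : ℝ) * ε) * |r * α r| := by rw [abs_mul]; ring
      refine hmono.trans (le_of_eq ?_)
      rw [integral_const_mul]
    rw [norm_smul, Real.norm_eq_abs, abs_of_pos (by positivity)]
    calc (ε * α₁)⁻¹ * ‖∫ r, α r • (ψ (t + ε * r) - ψ t)‖
        ≤ (ε * α₁)⁻¹ * (((L : ℝ) * ε) * T) := by
          gcongr
      _ = α₁⁻¹ * ((L : ℝ) * T) := by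
          field_simp
  -- vanishing outside a compact set
  have hzero : ∀ ε ∈ Set.Ioc (0:ℝ) 1, ∀ t : ℝ, M + R < |t| →
      (∫ s, ((α ((s - t) / ε) / (ε ^ 2 * α₁) : ℝ) : ℂ) * ψ s) = 0 := by
    intro ε hε t ht
    have : ∀ s : ℝ, ((α ((s - t) / ε) / (ε ^ 2 * α₁) : ℝ) : ℂ) * ψ s = 0 := by
      intro s
      by_cases hs : ψ s = 0
      · rw [hs, mul_zero]
      · have hsM : |s| ≤ M := by
          have h := hM (subset_tsupport ψ hs)
          simpa [Real.dist_eq] using h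
        have h1 : R < |s - t| := by
          have h2 : |t| - |s| ≤ |s - t| := by
            rw [abs_sub_comm]
            exact abs_sub_abs_le_abs_sub t s
          linarith
        have h2 : α ((s - t) / ε) = 0 := by
          by_contra h
          have h3 := hR (subset_tsupport α h)
          rw [Metric.mem_closedBall, Real.dist_eq, sub_zero, abs_div,
            abs_of_pos hε.1] at h3
          have h4 : |s - t| ≤ |s - t| / ε := by
            rw [le_div_iff₀ hε.1]
            nlinarith [abs_nonneg (s - t), hε.2]
          linarith
        rw [h2]
        norm_num
    rw [show (fun s => ((α ((s - t) / ε) / (ε ^ 2 * α₁) : ℝ) : ℂ) * ψ s)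
      = fun _ => (0 : ℂ) from funext this]
    exact integral_zero _ _
  -- continuity of the inner integral in t
  have hcont : ∀ ε : ℝ, 0 < ε → Continuous (fun t : ℝ => ∫ r, α r • ψ (t + ε * r)) := by
    intro ε hε
    refine continuous_of_dominated (fun t => ?_) (fun t => ae_of_all _ fun r => ?_)
      (hint.norm.mul_const Cψ) (ae_of_all _ fun r => ?_)
    · exact hmeas.aestronglyMeasurable.smul
        ((hψc.comp (continuous_const.add (continuous_const.mul continuous_id))).aestronglyMeasurable)
    · rw [norm_smul]
      exact mul_le_mul_of_nonneg_left (hCψ _) (norm_nonneg _)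
    · exact (hψc.comp (continuous_id.add continuous_const)).const_smul (α r)
  set N : ℝ := M + R with hN
  have hCnonneg : 0 ≤ α₁⁻¹ * ((L : ℝ) * T) := by positivity
  refine tendsto_integral_filter_of_dominated_convergence
    (fun t => (Set.Icc (-N) N).indicator (fun t => ‖u t‖ * (α₁⁻¹ * ((L : ℝ) * T))) t)
    ?_ ?_ ?_ ?_
  · refine eventually_nhdsWithin_of_forall fun ε hε => ?_
    have heq : (fun t => u t * ∫ s, ((α ((s - t) / ε) / (ε ^ 2 * α₁) : ℝ) : ℂ) * ψ s)
        = fun t => u t * ((ε * α₁)⁻¹ • ∫ r, α r • ψ (t + ε * r)) :=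
      funext fun t => by rw [key ε hε.1 t]
    rw [heq]
    exact hu.aestronglyMeasurable.mul
      (((hcont ε hε.1).const_smul ((ε * α₁)⁻¹)).aestronglyMeasurable)
  · refine eventually_nhdsWithin_of_forall fun ε hε => ae_of_all _ fun t => ?_
    by_cases ht : |t| ≤ N
    · have htmem : t ∈ Set.Icc (-N) N := abs_le.mp ht
      simp only [Set.indicator_of_mem htmem]
      rw [norm_mul]
      refine mul_le_mul_of_nonneg_left ?_ (norm_nonneg _)
      rw [key ε hε.1 t, ← key2 ε t]
      exact hC ε hε t
    · rw [hzero ε hε t (lt_of_not_ge ht), mul_zero, norm_zero]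
      exact Set.indicator_nonneg (fun x _ => mul_nonneg (norm_nonneg _) hCnonneg) t
  · exact (integrable_indicator_iff measurableSet_Icc).2
      ((hu.integrableOn_isCompact isCompact_Icc).norm.mul_const _)
  · refine ae_of_all _ fun t => ?_
    have h1 := (hlim t).const_mul (u t)
    refine Filter.Tendsto.congr' ?_ h1
    refine eventually_nhdsWithin_of_forall fun ε hε => ?_
    show u t * ((ε * α₁)⁻¹ • ∫ r, α r • (ψ (t + ε * r) - ψ t))
        = u t * ∫ s, ((α ((s - t) / ε) / (ε ^ 2 * α₁) : ℝ) : ℂ) * ψ s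
    rw [key ε hε.1 t, key2 ε t]
end

section
/- Let α : ℝ → ℝ be measurable, odd, and integrable, with α₁ := ∫_ℝ s·α(s) ds > 0, and suppose there is a constant A > 0 such that ∫_ℝ |s^j·α(s)| ds ≤ A·j! for every integer j ≥ 1. Then there exists δ > 0 such that for every ε > 0 and every ξ with 0 < |ξ| ≤ δ/ε, one has S_ε(ξ) ≠ 0. Consequently, every nonzero real zero of S_ε has absolute value greater than δ/ε, and thus tends to infinity as ε → 0⁺. -/
open MeasureTheory Real Set Filter Topology

/-!
After the substitution `t = ε u`, `S_ε(ξ)` is a positive multiple of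
`∫₀^∞ sin (η u) α(u) du` with `η = 2π ε ξ`. Divided by `η`, this integral tends to
`∫₀^∞ u α(u) du = α₁ / 2 > 0` as `η → 0`, by dominated convergence with the bound
`|sin (η u) / η| ≤ u`; so it is nonzero for all small `η ≠ 0`, i.e. for `0 < |ξ| ≤ δ / ε`.
-/

theorem tendsto_sin_mul_div_nhdsNE (s : ℝ) :
    Tendsto (fun η => sin (η * s) / η) (𝓝[≠] 0) (𝓝 s) := by
  have hderiv : HasDerivAt (fun η => sin (η * s)) s 0 := by
    simpa using ((hasDerivAt_id (0 : ℝ)).mul_const s).sin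
  simpa [slope_fun_def_field] using hasDerivAt_iff_tendsto_slope.mp hderiv

theorem abs_sin_mul_div_le (η s : ℝ) : |sin (η * s) / η| ≤ |s| := by
  rcases eq_or_ne η 0 with rfl | hη
  · simp
  rw [abs_div, div_le_iff₀ (abs_pos.mpr hη), mul_comm, ← abs_mul]
  exact abs_sin_le_abs

theorem tendsto_integral_sin_mul_div_mul {μ : Measure ℝ} {f : ℝ → ℝ}
    (hf : AEStronglyMeasurable f μ) (hf₁ : Integrable (fun s => s * f s) μ) :
    Tendsto (fun η => ∫ s, sin (η * s) / η * f s ∂μ) (𝓝[≠] 0) (𝓝 (∫ s, s * f s ∂μ)) := by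
  refine tendsto_integral_filter_of_dominated_convergence (fun s => ‖s * f s‖) ?_ ?_ hf₁.norm ?_
  · exact .of_forall fun η =>
      (by fun_prop : Continuous fun s => sin (η * s) / η).aestronglyMeasurable.mul hf
  · refine .of_forall fun η => .of_forall fun s => ?_
    rw [norm_mul, norm_mul]
    exact mul_le_mul_of_nonneg_right (abs_sin_mul_div_le η s) (norm_nonneg _)
  · exact .of_forall fun s => (tendsto_sin_mul_div_nhdsNE s).mul_const (f s)

theorem eventually_integral_sin_mul_ne_zero {μ : Measure ℝ} {f : ℝ → ℝ}
    (hf : AEStronglyMeasurable f μ) (hf₁ : ∫ s, s * f s ∂μ ≠ 0) :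
    ∀ᶠ η in 𝓝[≠] 0, ∫ s, sin (η * s) * f s ∂μ ≠ 0 := by
  filter_upwards [(tendsto_integral_sin_mul_div_mul hf (.of_integral_ne_zero hf₁)).eventually_ne hf₁,
    self_mem_nhdsWithin] with η hslope (hη : η ≠ 0)
  have : ∫ s, sin (η * s) * f s ∂μ = η * ∫ s, sin (η * s) / η * f s ∂μ := by
    rw [← integral_const_mul]
    congr with s
    field_simp
  rw [this]
  exact mul_ne_zero hη hslope

theorem integral_eq_two_mul_integral_Ioi_of_even {f : ℝ → ℝ} (hf : ∀ x, f (-x) = f x) :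
    ∫ x, f x = 2 * ∫ x in Ioi 0, f x := by
  rw [← integral_comp_abs]
  congr with x
  rcases abs_choice x with h | h <;> simp [h, hf]

theorem integral_Ioi_comp_div (g : ℝ → ℝ) {ε : ℝ} (hε : 0 < ε) :
    ∫ t in Ioi 0, g (t / ε) = ε * ∫ u in Ioi 0, g u := by
  simpa [div_eq_inv_mul] using integral_comp_mul_left_Ioi g 0 (inv_pos.mpr hε)

theorem stmt_4_general (α : ℝ → ℝ) (hmeas : Measurable α) (hodd : ∀ s, α (-s) = -α s)
    (α₁ : ℝ) (hα₁ : α₁ = ∫ s, s * α s) (hα₁pos : 0 < α₁) :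
    ∃ δ > (0:ℝ), ∀ ε > (0:ℝ), ∀ ξ : ℝ, ξ ≠ 0 → |ξ| ≤ δ / ε →
      (2 * ∫ t in Set.Ioi (0:ℝ), Real.sin (2 * π * ξ * t) * (α (t / ε) / (ε ^ 2 * α₁))) ≠ 0 := by
  have hhalf : ∫ s in Ioi 0, s * α s ≠ 0 := by
    have hα₁_half : α₁ = 2 * ∫ s in Ioi 0, s * α s :=
      hα₁.trans (integral_eq_two_mul_integral_Ioi_of_even fun s => by simp [hodd])
    intro h
    rw [h, mul_zero] at hα₁_half
    exact hα₁pos.ne' hα₁_half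
  obtain ⟨r, hr, hball⟩ := Metric.eventually_nhds_iff.mp <| eventually_nhdsWithin_iff.mp <|
    eventually_integral_sin_mul_ne_zero hmeas.aestronglyMeasurable hhalf
  refine ⟨r / (4 * π), by positivity, fun ε hε ξ hξ hξle => ?_⟩
  have hrescale : ∫ t in Ioi 0, sin (2 * π * ξ * t) * (α (t / ε) / (ε ^ 2 * α₁))
      = ε * (∫ u in Ioi 0, sin (2 * π * ε * ξ * u) * α u) / (ε ^ 2 * α₁) := by
    rw [← integral_Ioi_comp_div _ hε, ← integral_div]
    congr with t
    field_simp
  have hsmall : dist (2 * π * ε * ξ) 0 < r := by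
    rw [dist_zero_right, norm_eq_abs, abs_mul, abs_of_pos (by positivity)]
    calc 2 * π * ε * |ξ| ≤ 2 * π * ε * (r / (4 * π) / ε) := by gcongr
      _ < r := by field_simp; linarith
  rw [hrescale]
  have hsine := hball hsmall (by simp [hξ, hε.ne', pi_ne_zero])
  positivity

/-- zero-spreading lemma.  Under an analyticity-type moment bound,
the nonzero real zeros of the Fourier-sine symbol `S_ε` all have absolute value
larger than `δ / ε`, hence escape to infinity as `ε → 0⁺`. -/
theorem stmt_4 (α : ℝ → ℝ) (hmeas : Measurable α) (hodd : ∀ s, α (-s) = -α s)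
    (hint : Integrable α)
    (α₁ : ℝ) (hα₁ : α₁ = ∫ s, s * α s) (hα₁pos : 0 < α₁)
    (A : ℝ) (hA : 0 < A)
    (hmom : ∀ j : ℕ, 1 ≤ j → ∫ s, |s ^ j * α s| ≤ A * (Nat.factorial j)) :
    ∃ δ > (0:ℝ), ∀ ε > (0:ℝ), ∀ ξ : ℝ, ξ ≠ 0 → |ξ| ≤ δ / ε →
      (2 * ∫ t in Set.Ioi (0:ℝ), Real.sin (2 * π * ξ * t) * (α (t / ε) / (ε ^ 2 * α₁))) ≠ 0 :=
  stmt_4_general α hmeas hodd α₁ hα₁ hα₁pos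
end

section
/- Fix ε > 0 and let α_ε(s) := sgn(s)·e^{−|s|/ε}/(2ε²) (the rescaling of the odd kernel α(s) = sgn(s)·e^{−|s|}, which has first moment α₁ = 2). Let F(t) := 1/(1+t²) and u_ε(t) := arctan(t) + 2ε²·t/(1+t²)². Then for every t ∈ ℝ: ∫_ℝ α_ε(s−t)·u_ε(s) ds = F(t); that is, u_ε is a nonlocal antiderivative of F, solving D_{α,ε}u_ε = F. -/
/-!
With `A = arctan`, the function `u_ε` is `A - ε² A''`. Since `1 - ε²∂²` factors as
`(1 - ε∂)(1 + ε∂)`, on each side of `t` the integrand `e^{∓(s-t)/ε} (A - ε² A'')` is the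
exact derivative of `∓ε e^{∓(s-t)/ε} (A ± ε A')`, which vanishes at `±∞` because `A` and `A'`
are bounded. The two boundary terms at `s = t` are `ε (A ± ε A')(t)`; their difference, divided by `2ε²`, is
`A'(t) = 1 / (1 + t²)`.
-/

open MeasureTheory Real Set Filter
open scoped Topology

noncomputable def nonlocalDeriv (α u : ℝ → ℝ) (t : ℝ) : ℝ := ∫ s, α (s - t) * u s

noncomputable def oddExpKernel (ε x : ℝ) : ℝ :=
  Real.sign x * Real.exp (-|x| / ε) / (2 * ε ^ 2)

lemma oddExpKernel_of_pos {x : ℝ} (hx : 0 < x) (ε : ℝ) :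
    oddExpKernel ε x = (2 * ε ^ 2)⁻¹ * exp (-x / ε) := by
  rw [oddExpKernel, sign_of_pos hx, abs_of_pos hx]
  ring

lemma oddExpKernel_of_neg {x : ℝ} (hx : x < 0) (ε : ℝ) :
    oddExpKernel ε x = -(2 * ε ^ 2)⁻¹ * exp (-x / -ε) := by
  rw [oddExpKernel, sign_of_neg hx, abs_of_neg hx, neg_neg, neg_div_neg_eq]
  ring

lemma abs_add_mul_le {x y a b : ℝ} (hx : |x| ≤ a) (hy : |y| ≤ b) (c : ℝ) :
    |x + c * y| ≤ a + |c| * b :=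
  (abs_add_le _ _).trans (add_le_add hx (by rw [abs_mul]; gcongr))

lemma abs_sub_mul_le {x y a b : ℝ} (hx : |x| ≤ a) (hy : |y| ≤ b) (c : ℝ) :
    |x - c * y| ≤ a + |c| * b := by
  simpa [neg_mul, ← sub_eq_add_neg] using abs_add_mul_le hx hy (-c)

section

variable {f : ℝ → ℝ} {M c : ℝ}

lemma integrableOn_Ioi_exp_mul (hc : 0 < c) (hf : AEStronglyMeasurable f) (hfM : ∀ s, |f s| ≤ M)
    (t : ℝ) : IntegrableOn (fun s => exp (-(s - t) / c) * f s) (Ioi t) := by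
  have hexp : IntegrableOn (fun s => exp (-(s - t) / c)) (Ioi t) := by
    refine IntegrableOn.congr_fun ((integrableOn_exp_mul_Ioi (neg_lt_zero.2 (inv_pos.2 hc))
      t).mul_const (exp (t / c))) (fun s _ => ?_) measurableSet_Ioi
    rw [← exp_add]
    ring_nf
  exact hexp.mul_bdd hf.restrict (ae_of_all _ hfM)

lemma integrableOn_Iic_exp_mul (hc : c < 0) (hf : AEStronglyMeasurable f) (hfM : ∀ s, |f s| ≤ M)
    (t : ℝ) : IntegrableOn (fun s => exp (-(s - t) / c) * f s) (Iic t) := by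
  have hexp : IntegrableOn (fun s => exp (-(s - t) / c)) (Iic t) := by
    refine IntegrableOn.congr_fun ((integrableOn_exp_mul_Iic (neg_pos.2 (inv_lt_zero.2 hc))
      t).mul_const (exp (t / c))) (fun s _ => ?_) measurableSet_Iic
    rw [← exp_add]
    ring_nf
  exact hexp.mul_bdd hf.restrict (ae_of_all _ hfM)

end

lemma measurable_of_hasDerivAt {f f' : ℝ → ℝ} (hf : ∀ s, HasDerivAt f (f' s) s) :
    Measurable f' :=
  funext (fun s => (hf s).deriv) ▸ measurable_deriv f

section

variable {A A' A'' : ℝ → ℝ} {M : ℝ}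

lemma measurable_sub_mul_of_hasDerivAt (hA : ∀ s, HasDerivAt A (A' s) s)
    (hA' : ∀ s, HasDerivAt A' (A'' s) s) (c : ℝ) : Measurable (fun s => A s - c * A'' s) :=
  (continuous_iff_continuousAt.2 fun s => (hA s).continuousAt).measurable.sub
    ((measurable_of_hasDerivAt hA').const_mul c)

lemma hasDerivAt_exp_mul_add_mul_deriv (hA : ∀ s, HasDerivAt A (A' s) s)
    (hA' : ∀ s, HasDerivAt A' (A'' s) s) {c : ℝ} (hc : c ≠ 0) (t s : ℝ) :
    HasDerivAt (fun s => -c * (exp (-(s - t) / c) * (A s + c * A' s)))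
      (exp (-(s - t) / c) * (A s - c ^ 2 * A'' s)) s := by
  have hexp : HasDerivAt (fun s => exp (-(s - t) / c)) (exp (-(s - t) / c) * (-1 / c)) s :=
    (((hasDerivAt_id s).sub_const t).neg.div_const c).exp
  refine ((hexp.mul ((hA s).add ((hA' s).const_mul c))).const_mul (-c)).congr_deriv ?_
  simp only [Pi.add_apply]
  field_simp
  ring

lemma integral_Ioi_exp_mul_sub_sq_mul (hA : ∀ s, HasDerivAt A (A' s) s)
    (hA' : ∀ s, HasDerivAt A' (A'' s) s) (hA_bdd : ∀ s, |A s| ≤ M) (hA'_bdd : ∀ s, |A' s| ≤ M)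
    (hA''_bdd : ∀ s, |A'' s| ≤ M) {c : ℝ} (hc : 0 < c) (t : ℝ) :
    ∫ s in Ioi t, exp (-(s - t) / c) * (A s - c ^ 2 * A'' s) = c * (A t + c * A' t) := by
  have hexp : Tendsto (fun s => exp (-(s - t) / c)) atTop (𝓝 0) :=
    tendsto_exp_atBot.comp ((tendsto_neg_atTop_atBot.comp
      (tendsto_atTop_add_const_right _ (-t) tendsto_id)).atBot_div_const hc)
  have hlim : Tendsto (fun s => -c * (exp (-(s - t) / c) * (A s + c * A' s))) atTop (𝓝 0) := by
    simpa using (hexp.zero_mul_isBoundedUnder_le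
      (isBoundedUnder_of ⟨_, fun s => abs_add_mul_le (hA_bdd s) (hA'_bdd s) c⟩)).const_mul (-c)
  rw [integral_Ioi_of_hasDerivAt_of_tendsto'
    (fun s _ => hasDerivAt_exp_mul_add_mul_deriv hA hA' hc.ne' t s)
    (integrableOn_Ioi_exp_mul hc (measurable_sub_mul_of_hasDerivAt hA hA' _).aestronglyMeasurable
      (fun s => abs_sub_mul_le (hA_bdd s) (hA''_bdd s) _) t) hlim]
  simp

lemma integral_Iic_exp_mul_sub_sq_mul (hA : ∀ s, HasDerivAt A (A' s) s)
    (hA' : ∀ s, HasDerivAt A' (A'' s) s) (hA_bdd : ∀ s, |A s| ≤ M) (hA'_bdd : ∀ s, |A' s| ≤ M)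
    (hA''_bdd : ∀ s, |A'' s| ≤ M) {c : ℝ} (hc : c < 0) (t : ℝ) :
    ∫ s in Iic t, exp (-(s - t) / c) * (A s - c ^ 2 * A'' s) = -c * (A t + c * A' t) := by
  have hexp : Tendsto (fun s => exp (-(s - t) / c)) atBot (𝓝 0) :=
    tendsto_exp_atBot.comp ((tendsto_neg_atBot_atTop.comp
      (tendsto_atBot_add_const_right _ (-t) tendsto_id)).atTop_div_const_of_neg hc)
  have hlim : Tendsto (fun s => -c * (exp (-(s - t) / c) * (A s + c * A' s))) atBot (𝓝 0) := by
    simpa using (hexp.zero_mul_isBoundedUnder_le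
      (isBoundedUnder_of ⟨_, fun s => abs_add_mul_le (hA_bdd s) (hA'_bdd s) c⟩)).const_mul (-c)
  rw [integral_Iic_of_hasDerivAt_of_tendsto'
    (fun s _ => hasDerivAt_exp_mul_add_mul_deriv hA hA' hc.ne t s)
    (integrableOn_Iic_exp_mul hc (measurable_sub_mul_of_hasDerivAt hA hA' _).aestronglyMeasurable
      (fun s => abs_sub_mul_le (hA_bdd s) (hA''_bdd s) _) t) hlim]
  simp

theorem nonlocalDeriv_oddExpKernel (hA : ∀ s, HasDerivAt A (A' s) s)
    (hA' : ∀ s, HasDerivAt A' (A'' s) s) (hA_bdd : ∀ s, |A s| ≤ M) (hA'_bdd : ∀ s, |A' s| ≤ M)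
    (hA''_bdd : ∀ s, |A'' s| ≤ M) {ε : ℝ} (hε : 0 < ε) (t : ℝ) :
    nonlocalDeriv (oddExpKernel ε) (fun s => A s - ε ^ 2 * A'' s) t = A' t := by
  set u : ℝ → ℝ := fun s => A s - ε ^ 2 * A'' s
  have hu_meas : AEStronglyMeasurable u :=
    (measurable_sub_mul_of_hasDerivAt hA hA' _).aestronglyMeasurable
  have hu_bdd : ∀ s, |u s| ≤ M + |ε ^ 2| * M :=
    fun s => abs_sub_mul_le (hA_bdd s) (hA''_bdd s) _
  have hright : EqOn (fun s => oddExpKernel ε (s - t) * u s)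
      (fun s => (2 * ε ^ 2)⁻¹ * (exp (-(s - t) / ε) * u s)) (Ioi t) := by
    intro s hs
    simp only [oddExpKernel_of_pos (sub_pos.2 hs)]
    ring
  have hleft : EqOn (fun s => oddExpKernel ε (s - t) * u s)
      (fun s => -(2 * ε ^ 2)⁻¹ * (exp (-(s - t) / -ε) * u s)) (Iio t) := by
    intro s hs
    simp only [oddExpKernel_of_neg (sub_neg.2 hs)]
    ring
  have hIoi : IntegrableOn (fun s => oddExpKernel ε (s - t) * u s) (Ioi t) :=
    IntegrableOn.congr_fun ((integrableOn_Ioi_exp_mul hε hu_meas hu_bdd t).const_mul _)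
      hright.symm measurableSet_Ioi
  have hIic : IntegrableOn (fun s => oddExpKernel ε (s - t) * u s) (Iic t) := by
    rw [integrableOn_Iic_iff_integrableOn_Iio]
    exact IntegrableOn.congr_fun (IntegrableOn.mono_set
      ((integrableOn_Iic_exp_mul (neg_neg_of_pos hε) hu_meas hu_bdd t).const_mul _)
      Iio_subset_Iic_self) hleft.symm measurableSet_Iio
  have hIic_val := integral_Iic_exp_mul_sub_sq_mul hA hA' hA_bdd hA'_bdd hA''_bdd
    (neg_neg_of_pos hε) t
  rw [neg_sq] at hIic_val
  rw [nonlocalDeriv, ← intervalIntegral.integral_Iic_add_Ioi hIic hIoi,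
    integral_Iic_eq_integral_Iio, setIntegral_congr_fun measurableSet_Iio hleft,
    setIntegral_congr_fun measurableSet_Ioi hright, integral_const_mul, integral_const_mul,
    ← integral_Iic_eq_integral_Iio, hIic_val,
    integral_Ioi_exp_mul_sub_sq_mul hA hA' hA_bdd hA'_bdd hA''_bdd hε t]
  field_simp
  ring

end

lemma hasDerivAt_one_div_one_add_sq (s : ℝ) :
    HasDerivAt (fun s => 1 / (1 + s ^ 2)) (-(2 * s) / (1 + s ^ 2) ^ 2) s := by
  have hpos : (1 : ℝ) + s ^ 2 ≠ 0 := by positivity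
  refine ((hasDerivAt_const s 1).div ((hasDerivAt_pow 2 s).const_add 1) hpos).congr_deriv ?_
  ring

lemma abs_arctan_le_two (s : ℝ) : |arctan s| ≤ 2 :=
  abs_le.2 ⟨by linarith [neg_pi_div_two_lt_arctan s, pi_lt_four],
    by linarith [arctan_lt_pi_div_two s, pi_lt_four]⟩

lemma abs_one_div_one_add_sq_le (s : ℝ) : |1 / (1 + s ^ 2)| ≤ 1 := by
  rw [abs_of_pos (by positivity), div_le_one (by positivity)]
  nlinarith [sq_nonneg s]

lemma abs_neg_two_mul_div_one_add_sq_sq_le (s : ℝ) : |-(2 * s) / (1 + s ^ 2) ^ 2| ≤ 1 := by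
  rw [abs_div, abs_neg, abs_of_pos (by positivity : (0 : ℝ) < (1 + s ^ 2) ^ 2),
    div_le_one (by positivity), abs_mul, abs_two]
  nlinarith [sq_nonneg (|s| - 1), sq_abs s, sq_nonneg s, abs_nonneg s]

/-- for the exponential kernel `α_ε(s) = sgn(s) e^{-|s|/ε}/(2ε²)`,
the function `u_ε(t) = arctan t + 2ε² t/(1+t²)²` is a nonlocal antiderivative
of `F(t) = 1/(1+t²)`. -/
theorem stmt_7 (ε : ℝ) (hε : 0 < ε) (t : ℝ) :
    ∫ s, (Real.sign (s - t) * Real.exp (-|s - t| / ε) / (2 * ε ^ 2)) *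
      (Real.arctan s + 2 * ε ^ 2 * s / (1 + s ^ 2) ^ 2) = 1 / (1 + t ^ 2) := by
  have hu : (fun s => arctan s + 2 * ε ^ 2 * s / (1 + s ^ 2) ^ 2) =
      fun s => arctan s - ε ^ 2 * (-(2 * s) / (1 + s ^ 2) ^ 2) := by
    funext s
    ring
  have := nonlocalDeriv_oddExpKernel hasDerivAt_arctan hasDerivAt_one_div_one_add_sq
    abs_arctan_le_two (fun s => (abs_one_div_one_add_sq_le s).trans one_le_two)
    (fun s => (abs_neg_two_mul_div_one_add_sq_sq_le s).trans one_le_two) hε t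
  rwa [← hu] at this
end

section
/- Let β : (0,∞) → [0,∞) be nonincreasing with ∫₀^∞ min(s,1)·β(s) ds < ∞, and suppose there exists a > 0 such that β is strictly decreasing on (0,a). Then for every ξ > 0: ∫₀^∞ sin(2πξs)·β(s) ds > 0. (Hence for kernels α(s) = sgn(s)·β(|s|) of this form, i·α̂(ξ) > 0 for ξ > 0, so α̂ vanishes only at ξ = 0.) -/
open MeasureTheory Real Set Filter
open scoped Topology

/-! With `T = π / ω`, the shift `x ↦ x + T` folds each period `[2kT, 2(k+1)T]` of
`sin (ω x) β x` onto its first half, where the integrand becomes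
`sin (ω x) (β x - β (x + T))`, a product of two nonnegative factors since `β` is antitone.
So every period contributes nonnegatively and the first one strictly, because `β` strictly
decreases near `0`; the integral over `(0, ∞)` is the limit of the sums over periods. -/

lemma abs_sin_mul_le_mul_min (ω : ℝ) {s : ℝ} (hs : 0 ≤ s) :
    |sin (ω * s)| ≤ (|ω| + 1) * min s 1 := by
  rcases le_total s 1 with h | h
  · calc |sin (ω * s)| ≤ |ω * s| := abs_sin_le_abs
      _ = |ω| * s := by rw [abs_mul, abs_of_nonneg hs]
      _ ≤ (|ω| + 1) * min s 1 := by rw [min_eq_left h]; nlinarith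
  · calc |sin (ω * s)| ≤ 1 := abs_sin_le_one _
      _ ≤ (|ω| + 1) * min s 1 := by rw [min_eq_right h]; linarith [abs_nonneg ω]

lemma integrableOn_sin_mul_of_integrableOn_min_mul {β : ℝ → ℝ} (ω : ℝ)
    (hβ : AEStronglyMeasurable β (volume.restrict (Ioi 0)))
    (hint : IntegrableOn (fun s => min s 1 * β s) (Ioi 0)) :
    IntegrableOn (fun s => sin (ω * s) * β s) (Ioi 0) := by
  refine (hint.norm.const_mul (|ω| + 1)).mono' ((by fun_prop : Continuous fun s =>
    sin (ω * s)).aestronglyMeasurable.mul hβ) ?_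
  filter_upwards [ae_restrict_mem measurableSet_Ioi] with s (hs : 0 < s)
  rw [norm_mul, norm_mul, Real.norm_of_nonneg (le_min hs.le zero_le_one), ← mul_assoc]
  exact mul_le_mul_of_nonneg_right (abs_sin_mul_le_mul_min ω hs.le) (norm_nonneg _)

lemma intervalIntegrable_of_integrableOn_Ioi {g : ℝ → ℝ} (hg : IntegrableOn g (Ioi 0))
    {u v : ℝ} (hu : 0 ≤ u) (hv : 0 ≤ v) : IntervalIntegrable g volume u v :=
  ((integrableOn_Ici_iff_integrableOn_Ioi (f := g)).mpr hg).mono_set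
    (ordConnected_Ici.uIcc_subset (mem_Ici.mpr hu) (mem_Ici.mpr hv)) |>.intervalIntegrable

lemma intervalIntegral_le_integral_Ioi_of_blocks_nonneg {g : ℝ → ℝ} {p : ℝ} (hp : 0 < p)
    (hg : IntegrableOn g (Ioi 0)) (hblock : ∀ k : ℕ, 0 ≤ ∫ x in k * p..(k + 1) * p, g x) :
    ∫ x in 0..p, g x ≤ ∫ x in Ioi 0, g x := by
  have hsum : ∀ n : ℕ, ∑ k ∈ Finset.range n, ∫ x in k * p..(k + 1) * p, g x
      = ∫ x in 0..n * p, g x := by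
    intro n
    simpa using intervalIntegral.sum_integral_adjacent_intervals (a := fun k : ℕ => k * p)
      fun k _ => intervalIntegrable_of_integrableOn_Ioi hg (by positivity) (by positivity)
  have hlim : Tendsto (fun n : ℕ => ∫ x in 0..n * p, g x) atTop (𝓝 (∫ x in Ioi 0, g x)) :=
    intervalIntegral_tendsto_integral_Ioi 0 hg
      (tendsto_natCast_atTop_atTop.atTop_mul_const hp)
  refine ge_of_tendsto hlim (eventually_ge_atTop 1 |>.mono fun n hn => ?_)
  rw [← hsum]
  simpa using Finset.single_le_sum (fun k _ => hblock k) (Finset.mem_range.mpr hn)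

lemma intervalIntegrable_add_comp_add_right_of_integrableOn_Ioi {g : ℝ → ℝ}
    (hg : IntegrableOn g (Ioi 0)) {T u v : ℝ} (hT : 0 ≤ T) (hu : 0 ≤ u) (hv : 0 ≤ v) :
    IntervalIntegrable (fun x => g x + g (x + T)) volume u v := by
  refine (intervalIntegrable_of_integrableOn_Ioi hg hu hv).add ?_
  simpa using (intervalIntegrable_of_integrableOn_Ioi hg (add_nonneg hu hT)
    (add_nonneg hv hT)).comp_add_right T

lemma intervalIntegral_eq_integral_add_comp_add_right {g : ℝ → ℝ} {u T : ℝ}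
    (h₁ : IntervalIntegrable g volume u (u + T))
    (h₂ : IntervalIntegrable g volume (u + T) (u + T + T)) :
    ∫ x in u..u + T + T, g x = ∫ x in u..u + T, (g x + g (x + T)) := by
  have h₂' : IntervalIntegrable (fun x => g (x + T)) volume u (u + T) := by
    simpa using h₂.comp_add_right T
  rw [← intervalIntegral.integral_add_adjacent_intervals h₁ h₂,
    intervalIntegral.integral_add h₁ h₂', intervalIntegral.integral_comp_add_right]

section SineTransform

variable {β : ℝ → ℝ} {ω : ℝ}

lemma sin_mul_add_pi_div (hω : ω ≠ 0) (x : ℝ) : sin (ω * (x + π / ω)) = -sin (ω * x) := by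
  rw [mul_add, mul_div_cancel₀ π hω, sin_add_pi]

lemma sin_mul_nonneg_of_mem_Icc (hω : 0 < ω) (k : ℕ) {x : ℝ}
    (hx : x ∈ Icc (k * (2 * π / ω)) (k * (2 * π / ω) + π / ω)) : 0 ≤ sin (ω * x) := by
  have h₁ := mul_le_mul_of_nonneg_left hx.1 hω.le
  have h₂ := mul_le_mul_of_nonneg_left hx.2 hω.le
  rw [mul_add, mul_left_comm, mul_div_cancel₀ _ hω.ne', mul_div_cancel₀ _ hω.ne'] at h₂
  rw [mul_left_comm, mul_div_cancel₀ _ hω.ne'] at h₁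
  rw [← sin_sub_nat_mul_two_pi _ k]
  exact sin_nonneg_of_nonneg_of_le_pi (by linarith) (by linarith)

lemma sin_mul_add_sin_mul_add_pi_div (hω : ω ≠ 0) (x : ℝ) :
    sin (ω * x) * β x + sin (ω * (x + π / ω)) * β (x + π / ω)
      = sin (ω * x) * (β x - β (x + π / ω)) := by
  rw [sin_mul_add_pi_div hω]
  ring

lemma sin_mul_mul_sub_nonneg (hω : 0 < ω) (hβ : AntitoneOn β (Ioi 0)) (k : ℕ) {x : ℝ}
    (hx₀ : 0 < x) (hx : x ∈ Icc (k * (2 * π / ω)) (k * (2 * π / ω) + π / ω)) :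
    0 ≤ sin (ω * x) * (β x - β (x + π / ω)) :=
  mul_nonneg (sin_mul_nonneg_of_mem_Icc hω k hx)
    (sub_nonneg.mpr
      (hβ hx₀ (add_pos hx₀ (by positivity)) (le_add_of_nonneg_right (by positivity))))

lemma integral_sin_mul_eq_integral_add_comp_add_right (hω : 0 < ω)
    (hg : IntegrableOn (fun s => sin (ω * s) * β s) (Ioi 0)) {u : ℝ} (hu : 0 ≤ u) :
    ∫ x in u..u + π / ω + π / ω, sin (ω * x) * β x
      = ∫ x in u..u + π / ω,
          (sin (ω * x) * β x + sin (ω * (x + π / ω)) * β (x + π / ω)) :=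
  intervalIntegral_eq_integral_add_comp_add_right
    (intervalIntegrable_of_integrableOn_Ioi hg hu (by positivity))
    (intervalIntegrable_of_integrableOn_Ioi hg (by positivity) (by positivity))

lemma integral_sin_mul_period_nonneg (hω : 0 < ω) (hβ : AntitoneOn β (Ioi 0))
    (hg : IntegrableOn (fun s => sin (ω * s) * β s) (Ioi 0)) (k : ℕ) :
    0 ≤ ∫ x in k * (2 * π / ω)..(k + 1) * (2 * π / ω), sin (ω * x) * β x := by
  have hu : 0 ≤ k * (2 * π / ω) := by positivity
  rw [show (k + 1) * (2 * π / ω) = k * (2 * π / ω) + π / ω + π / ω by ring,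
    integral_sin_mul_eq_integral_add_comp_add_right hω hg hu,
    intervalIntegral.integral_of_le (le_add_of_nonneg_right (by positivity))]
  refine setIntegral_nonneg measurableSet_Ioc fun x hx => ?_
  rw [sin_mul_add_sin_mul_add_pi_div hω.ne']
  exact sin_mul_mul_sub_nonneg hω hβ k (hu.trans_lt hx.1) (Ioc_subset_Icc_self hx)

lemma integral_sin_mul_first_period_pos (hω : 0 < ω) (hβ : AntitoneOn β (Ioi 0))
    {a : ℝ} (ha : 0 < a) (hβa : StrictAntiOn β (Ioo 0 a))
    (hg : IntegrableOn (fun s => sin (ω * s) * β s) (Ioi 0)) :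
    0 < ∫ x in 0..2 * π / ω, sin (ω * x) * β x := by
  set T := π / ω
  have hT₀ : 0 < T := by positivity
  set c := min a T
  have hc₀ : 0 < c := lt_min ha hT₀
  have hca : c ≤ a := min_le_left _ _
  have hcT : c ≤ T := min_le_right _ _
  have hF := fun {u v : ℝ} (hu : 0 ≤ u) (hv : 0 ≤ v) =>
    intervalIntegrable_add_comp_add_right_of_integrableOn_Ioi hg hT₀.le hu hv
  rw [show 2 * π / ω = 0 + T + T by ring,
    integral_sin_mul_eq_integral_add_comp_add_right hω hg le_rfl, zero_add,
    ← intervalIntegral.integral_add_adjacent_intervals (b := c) (hF le_rfl hc₀.le)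
      (hF hc₀.le hT₀.le)]
  have hleft : 0 < ∫ x in 0..c, (sin (ω * x) * β x + sin (ω * (x + T)) * β (x + T)) := by
    refine intervalIntegral.intervalIntegral_pos_of_pos_on (hF le_rfl hc₀.le)
      (fun x hx => ?_) hc₀
    obtain ⟨hx₀, hxc⟩ := hx
    rw [sin_mul_add_sin_mul_add_pi_div hω.ne']
    refine mul_pos (sin_pos_of_pos_of_lt_pi (mul_pos hω hx₀) ?_) (sub_pos.mpr ?_)
    · exact (mul_lt_mul_of_pos_left (hxc.trans_le hcT) hω).trans_eq (mul_div_cancel₀ π hω.ne')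
    · calc β (x + T) ≤ β ((x + c) / 2) :=
            hβ (show 0 < (x + c) / 2 by linarith) (show 0 < x + T by linarith) (by linarith)
        _ < β x := hβa ⟨hx₀, by linarith⟩ ⟨by linarith, by linarith⟩ (by linarith)
  have hright : 0 ≤ ∫ x in c..T, (sin (ω * x) * β x + sin (ω * (x + T)) * β (x + T)) := by
    refine intervalIntegral.integral_nonneg (min_le_right _ _) fun x hx => ?_
    rw [sin_mul_add_sin_mul_add_pi_div hω.ne']
    exact sin_mul_mul_sub_nonneg hω hβ 0 (hc₀.trans_le hx.1)
      (by simpa using ⟨hc₀.le.trans hx.1, hx.2⟩)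
  linarith

theorem integral_sin_mul_pos (hω : 0 < ω) (hβ : AntitoneOn β (Ioi 0)) {a : ℝ} (ha : 0 < a)
    (hβa : StrictAntiOn β (Ioo 0 a)) (hint : IntegrableOn (fun s => min s 1 * β s) (Ioi 0)) :
    0 < ∫ s in Ioi 0, sin (ω * s) * β s := by
  have hg := integrableOn_sin_mul_of_integrableOn_min_mul ω
    (aemeasurable_restrict_of_antitoneOn measurableSet_Ioi hβ).aestronglyMeasurable hint
  exact (integral_sin_mul_first_period_pos hω hβ ha hβa hg).trans_le
    (intervalIntegral_le_integral_Ioi_of_blocks_nonneg (by positivity) hg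
      (integral_sin_mul_period_nonneg hω hβ hg))

end SineTransform

theorem stmt_9_general (β : ℝ → ℝ)
    (hmono : ∀ s t, 0 < s → s ≤ t → β t ≤ β s)
    (hint : IntegrableOn (fun s => min s 1 * β s) (Set.Ioi 0))
    (a : ℝ) (ha : 0 < a)
    (hstrict : ∀ s t, 0 < s → s < t → t < a → β t < β s)
    (ξ : ℝ) (hξ : 0 < ξ) :
    0 < ∫ s in Set.Ioi (0:ℝ), Real.sin (2 * π * ξ * s) * β s :=
  integral_sin_mul_pos (by positivity) (fun s hs t _ hst => hmono s t hs hst) ha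
    (fun s hs t ht hst => hstrict s t hs.1 hst ht.2) hint

/-- positivity of the Fourier-sine transform of a nonincreasing
nonnegative kernel profile that is strictly decreasing near the origin. -/
theorem stmt_9 (β : ℝ → ℝ) (hnn : ∀ s, 0 < s → 0 ≤ β s)
    (hmono : ∀ s t, 0 < s → s ≤ t → β t ≤ β s)
    (hint : IntegrableOn (fun s => min s 1 * β s) (Set.Ioi 0))
    (a : ℝ) (ha : 0 < a)
    (hstrict : ∀ s t, 0 < s → s < t → t < a → β t < β s)
    (ξ : ℝ) (hξ : 0 < ξ) :
    0 < ∫ s in Set.Ioi (0:ℝ), Real.sin (2 * π * ξ * s) * β s :=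
  stmt_9_general β hmono hint a ha hstrict ξ hξ
end

section
/- Let α(s) = sgn(s)·β(|s|) with β : (0,∞) → [0,∞) measurable, and assume the moments α₁ = 2∫₀^∞ s·β(s) ds and α₃ = 2∫₀^∞ s³·β(s) ds are finite with α₁ > 0. Set C_α := 4π³·α₃/(3·α₁). Then for every ε > 0 and every ξ ≥ 0: 2πξ − C_α·ε²·ξ³ ≤ S_ε(ξ) ≤ 2πξ. (Near-field estimate for the Fourier symbol of the nonlocal derivative.) -/
/-!
Since `x - x³/6 ≤ sin x ≤ x` for `x ≥ 0` and `β ≥ 0`, integrating against `β(t/ε)` bounds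
`∫₀^∞ sin(2πξt) β(t/ε) dt` between `2πξ M₁ - (2πξ)³/6 · M₃` and `2πξ M₁`, where `M₁` and `M₃` are
the first and third moments of `β(·/ε)`. The substitution `t = εs` gives `M₁ = ε² α₁ / 2` and
`M₃ = ε⁴ α₃ / 2`, and dividing by the normalisation `ε² α₁ / 2` yields the two bounds.
-/

open MeasureTheory Real Set Filter

section Rescaling

variable {ε : ℝ}

theorem integral_Ioi_pow_mul_comp_div (hε : 0 < ε) (f : ℝ → ℝ) (n : ℕ) :
    ∫ t in Ioi 0, t ^ n * f (t / ε) = ε ^ (n + 1) * ∫ s in Ioi 0, s ^ n * f s := by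
  have hscale : ∀ t, t ^ n * f (t / ε) = ε ^ n * ((t * ε⁻¹) ^ n * f (t * ε⁻¹)) := fun t => by
    rw [← div_eq_mul_inv, div_pow]
    field_simp
  simp_rw [hscale]
  rw [integral_const_mul, integral_comp_mul_right_Ioi (fun s => s ^ n * f s) 0 (inv_pos.2 hε),
    zero_mul, inv_inv, smul_eq_mul, pow_succ, mul_assoc]

theorem integrableOn_Ioi_pow_mul_comp_div (hε : 0 < ε) {f : ℝ → ℝ} {n : ℕ}
    (hf : IntegrableOn (fun s => s ^ n * f s) (Ioi 0)) :
    IntegrableOn (fun t => t ^ n * f (t / ε)) (Ioi 0) := by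
  have hcomp : IntegrableOn (fun t => (ε⁻¹ * t) ^ n * f (ε⁻¹ * t)) (Ioi 0) := by
    simpa using (integrableOn_Ioi_comp_mul_left_iff (fun s => s ^ n * f s) 0 (inv_pos.2 hε)).2
      (by simpa using hf)
  refine IntegrableOn.congr_fun (hcomp.const_mul (ε ^ n)) (fun t _ => ?_) measurableSet_Ioi
  rw [mul_pow, ← mul_assoc, ← mul_assoc, ← mul_pow, mul_inv_cancel₀ hε.ne', one_pow, one_mul,
    inv_mul_eq_div]

end Rescaling

section SineMoments

variable {g : ℝ → ℝ} {c : ℝ}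

theorem integrableOn_Ioi_sin_mul_of_mul (hg : AEStronglyMeasurable g (volume.restrict (Ioi 0)))
    (h₁ : IntegrableOn (fun t => t * g t) (Ioi 0)) :
    IntegrableOn (fun t => sin (c * t) * g t) (Ioi 0) := by
  refine (h₁.const_mul c).mono
    ((continuous_sin.comp (continuous_const_mul c)).aestronglyMeasurable.mul hg)
    (Eventually.of_forall fun t => ?_)
  rw [norm_mul, norm_mul c, norm_mul t, ← mul_assoc, ← norm_mul c]
  gcongr
  exact abs_sin_le_abs

theorem setIntegral_Ioi_sin_mul_le (hc : 0 ≤ c) (hg_nonneg : ∀ t, 0 < t → 0 ≤ g t)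
    (hg : AEStronglyMeasurable g (volume.restrict (Ioi 0)))
    (h₁ : IntegrableOn (fun t => t * g t) (Ioi 0)) :
    ∫ t in Ioi 0, sin (c * t) * g t ≤ c * ∫ t in Ioi 0, t * g t := by
  rw [← integral_const_mul]
  refine setIntegral_mono_on (integrableOn_Ioi_sin_mul_of_mul hg h₁) (h₁.const_mul c)
    measurableSet_Ioi fun t ht => ?_
  rw [← mul_assoc]
  exact mul_le_mul_of_nonneg_right (sin_le (mul_nonneg hc ht.le)) (hg_nonneg t ht)

theorem le_setIntegral_Ioi_sin_mul (hc : 0 ≤ c) (hg_nonneg : ∀ t, 0 < t → 0 ≤ g t)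
    (hg : AEStronglyMeasurable g (volume.restrict (Ioi 0)))
    (h₁ : IntegrableOn (fun t => t * g t) (Ioi 0))
    (h₃ : IntegrableOn (fun t => t ^ 3 * g t) (Ioi 0)) :
    c * (∫ t in Ioi 0, t * g t) - c ^ 3 / 6 * ∫ t in Ioi 0, t ^ 3 * g t ≤
      ∫ t in Ioi 0, sin (c * t) * g t := by
  rw [← integral_const_mul c, ← integral_const_mul (c ^ 3 / 6), ← integral_sub (h₁.const_mul c)
    (h₃.const_mul _)]
  refine setIntegral_mono_on ((h₁.const_mul c).sub (h₃.const_mul _))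
    (integrableOn_Ioi_sin_mul_of_mul hg h₁) measurableSet_Ioi fun t ht => ?_
  calc c * (t * g t) - c ^ 3 / 6 * (t ^ 3 * g t) = (c * t - (c * t) ^ 3 / 6) * g t := by ring
    _ ≤ sin (c * t) * g t :=
      mul_le_mul_of_nonneg_right (sin_ge_sub_cube (mul_nonneg hc ht.le)) (hg_nonneg t ht)

end SineMoments

theorem setIntegral_Ioi_sin_mul_comp_div_mem_Icc {β : ℝ → ℝ} (hβ : Measurable β)
    (hβ_nonneg : ∀ s, 0 < s → 0 ≤ β s) (h₁ : IntegrableOn (fun s => s * β s) (Ioi 0))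
    (h₃ : IntegrableOn (fun s => s ^ 3 * β s) (Ioi 0)) {ε c : ℝ} (hε : 0 < ε) (hc : 0 ≤ c) :
    ∫ t in Ioi 0, sin (c * t) * β (t / ε) ∈ Icc
      (c * (ε ^ 2 * ∫ s in Ioi 0, s * β s) - c ^ 3 / 6 * (ε ^ 4 * ∫ s in Ioi 0, s ^ 3 * β s))
      (c * (ε ^ 2 * ∫ s in Ioi 0, s * β s)) := by
  have hM₁ := integral_Ioi_pow_mul_comp_div hε β 1
  have hM₃ := integral_Ioi_pow_mul_comp_div hε β 3
  simp only [pow_one, Nat.reduceAdd] at hM₁ hM₃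
  have h₁ε : IntegrableOn (fun t => t * β (t / ε)) (Ioi 0) := by
    simpa using integrableOn_Ioi_pow_mul_comp_div hε (n := 1) (by simpa using h₁)
  have hg_nonneg : ∀ t, 0 < t → 0 ≤ β (t / ε) := fun t ht => hβ_nonneg _ (div_pos ht hε)
  have hg : AEStronglyMeasurable (fun t => β (t / ε)) (volume.restrict (Ioi 0)) :=
    (hβ.comp (measurable_id.div_const ε)).aestronglyMeasurable
  rw [← hM₁, ← hM₃]
  exact ⟨le_setIntegral_Ioi_sin_mul hc hg_nonneg hg h₁ε
      (integrableOn_Ioi_pow_mul_comp_div hε h₃),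
    setIntegral_Ioi_sin_mul_le hc hg_nonneg hg h₁ε⟩

/-- near-field estimate `2πξ - C_α ε² ξ³ ≤ S_ε(ξ) ≤ 2πξ` for the
Fourier-sine symbol of the rescaled odd kernel `α(s) = sgn(s) β(|s|)`. -/
theorem stmt_11 (β : ℝ → ℝ) (hβmeas : Measurable β) (hnn : ∀ s, 0 < s → 0 ≤ β s)
    (hint1 : IntegrableOn (fun s => s * β s) (Set.Ioi 0))
    (hint3 : IntegrableOn (fun s => s ^ 3 * β s) (Set.Ioi 0))
    (α₁ α₃ : ℝ)
    (hα₁ : α₁ = 2 * ∫ s in Set.Ioi (0:ℝ), s * β s)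
    (hα₃ : α₃ = 2 * ∫ s in Set.Ioi (0:ℝ), s ^ 3 * β s)
    (hα₁pos : 0 < α₁)
    (Cα : ℝ) (hC : Cα = 4 * π ^ 3 * α₃ / (3 * α₁))
    (S : ℝ → ℝ → ℝ)
    (hS : ∀ ε ξ, S ε ξ =
      2 * ∫ t in Set.Ioi (0:ℝ), Real.sin (2 * π * ξ * t) * (β (t / ε) / (ε ^ 2 * α₁)))
    (ε : ℝ) (hε : 0 < ε) (ξ : ℝ) (hξ : 0 ≤ ξ) :
    2 * π * ξ - Cα * ε ^ 2 * ξ ^ 3 ≤ S ε ξ ∧ S ε ξ ≤ 2 * π * ξ := by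
  obtain ⟨hlower, hupper⟩ := setIntegral_Ioi_sin_mul_comp_div_mem_Icc hβmeas hnn hint1 hint3 hε
    (c := 2 * π * ξ) (by positivity)
  simp_rw [hS, ← mul_div_assoc, integral_div]
  have hden : 0 < ε ^ 2 * α₁ := by positivity
  rw [mul_div_assoc', le_div_iff₀ hden, div_le_iff₀ hden]
  constructor
  · have hlhs : (2 * π * ξ - Cα * ε ^ 2 * ξ ^ 3) * (ε ^ 2 * α₁) =
        2 * (2 * π * ξ * (ε ^ 2 * ∫ s in Ioi 0, s * β s) -
          (2 * π * ξ) ^ 3 / 6 * (ε ^ 4 * ∫ s in Ioi 0, s ^ 3 * β s)) := by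
      rw [hC]
      field_simp
      rw [hα₁, hα₃]
      ring
    linarith
  · rw [hα₁]
    linarith
end

section
/- Let α(s) = sgn(s)·β(|s|) with β : (0,∞) → [0,∞) nonincreasing, min(s,1)·β(s) integrable on (0,∞), and α₁ := 2∫₀^∞ s·β(s) ds ∈ (0,∞). Assume the singular flatness condition: there exist b > 0, k ∈ (−2,0), and K₋, K₊ > 0 with K₋·s^k ≤ β(s) ≤ K₊·s^k for all s ∈ (0,b), and c := ∫₀¹ sin(πu)·(K₋·u^k − K₊·(u+1)^k) du > 0. Set C′ := c·2^{−k}/α₁. Then for every ε > 0 and every ξ ≥ 1/(εb): S_ε(ξ) ≥ C′·ε^{−2−k}·ξ^{−1−k} > 0. (Far-field lower bound, singular-kernel case.) -/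
open MeasureTheory Real Set Filter

/-!
After the substitution `t = ε s`, `S ε ξ` is a positive multiple of `∫₀^∞ sin (l s) β s ds`
with `l = 2 π ξ ε`. Let `h = π / l`. Since `sin (l (t + h)) = - sin (l t)`, the integral over a
full period `[a, a + 2h]` with `a ∈ 2h ℕ` equals `∫ₐ^{a+h} sin (l t) (β t - β (t + h)) dt`, which
is nonnegative because `β` is nonincreasing. Hence the integral is at least its first period;
there, once `2h ≤ b`, the bounds `K₋ t^k ≤ β t` and `β (t + h) ≤ K₊ (t + h)^k` apply, and the
substitution `t = h u` turns the resulting lower bound into `h^(1+k) c`.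
-/

theorem integrableOn_sin_mul_of_integrableOn_min_mul_s12 {f : ℝ → ℝ} (l : ℝ)
    (hf : IntegrableOn (fun s => min s 1 * f s) (Ioi 0)) :
    IntegrableOn (fun s => sin (l * s) * f s) (Ioi 0) := by
  have hmeas : AEStronglyMeasurable (fun s => sin (l * s) / min s 1) (volume.restrict (Ioi 0)) :=
    (by fun_prop : Measurable fun s => sin (l * s) / min s 1).aestronglyMeasurable
  have hbound : ∀ᵐ s ∂(volume.restrict (Ioi 0)), ‖sin (l * s) / min s 1‖ ≤ max |l| 1 := by
    refine (ae_restrict_iff' measurableSet_Ioi).mpr (ae_of_all _ fun s (hs : 0 < s) => ?_)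
    rw [norm_div, norm_of_nonneg (lt_min hs one_pos).le, div_le_iff₀ (lt_min hs one_pos)]
    rcases le_total s 1 with hs1 | hs1
    · calc ‖sin (l * s)‖ ≤ |l| * s := by
            simpa [abs_mul, abs_of_pos hs] using abs_sin_le_abs (x := l * s)
        _ ≤ max |l| 1 * min s 1 := by rw [min_eq_left hs1]; gcongr; exact le_max_left _ _
    · calc ‖sin (l * s)‖ ≤ 1 := abs_sin_le_one _
        _ ≤ max |l| 1 * min s 1 := by rw [min_eq_right hs1, mul_one]; exact le_max_right _ _
  refine (hf.bdd_mul hmeas hbound).congr ((ae_restrict_iff' measurableSet_Ioi).mpr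
    (ae_of_all _ fun s (hs : 0 < s) => ?_))
  have : min s 1 ≠ 0 := (lt_min hs one_pos).ne'
  field_simp

theorem intervalIntegral.integral_eq_integral_add_comp_add_right {F : ℝ → ℝ} {a h : ℝ}
    (hh : 0 ≤ h) (hF : IntervalIntegrable F volume a (a + 2 * h)) :
    ∫ x in a..a + 2 * h, F x = ∫ x in a..a + h, (F x + F (x + h)) := by
  rw [two_mul, ← add_assoc] at hF ⊢
  have h₁ : IntervalIntegrable F volume a (a + h) :=
    hF.mono_set (uIcc_subset_uIcc_left (mem_uIcc_of_le (by linarith) (by linarith)))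
  have h₂ : IntervalIntegrable F volume (a + h) (a + h + h) :=
    hF.mono_set (uIcc_subset_uIcc_right (mem_uIcc_of_le (by linarith) (by linarith)))
  have h₂' : IntervalIntegrable (fun x => F (x + h)) volume a (a + h) := by
    simpa using h₂.comp_add_right h
  rw [integral_add h₁ h₂', integral_comp_add_right, integral_add_adjacent_intervals h₁ h₂]

theorem sin_mul_add_of_mul_eq_pi {l h : ℝ} (hlh : l * h = π) (t : ℝ) :
    sin (l * (t + h)) = -sin (l * t) := by
  rw [mul_add, hlh, sin_add_pi]

theorem integral_sin_mul_period_nonneg_s12 {f : ℝ → ℝ} {l : ℝ} (hl : 0 < l) (n : ℕ)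
    (hf : AntitoneOn f (Ici (n * (2 * (π / l)))))
    (hfi : IntervalIntegrable (fun t => sin (l * t) * f t) volume
      (n * (2 * (π / l))) (n * (2 * (π / l)) + 2 * (π / l))) :
    0 ≤ ∫ t in n * (2 * (π / l))..n * (2 * (π / l)) + 2 * (π / l), sin (l * t) * f t := by
  set a := n * (2 * (π / l))
  have hh : 0 < π / l := div_pos pi_pos hl
  rw [intervalIntegral.integral_eq_integral_add_comp_add_right hh.le hfi]
  refine intervalIntegral.integral_nonneg (by linarith) fun t ⟨hat, hta⟩ => ?_
  have hsin : 0 ≤ sin (l * t) := by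
    have ht : l * t = l * (t - a) + n * (2 * π) := by simp only [a]; field_simp; ring
    rw [ht, sin_add_nat_mul_two_pi]
    apply sin_nonneg_of_nonneg_of_le_pi (by nlinarith)
    calc l * (t - a) ≤ l * (π / l) := by gcongr; linarith
      _ = π := mul_div_cancel₀ _ hl.ne'
  rw [sin_mul_add_of_mul_eq_pi (mul_div_cancel₀ π hl.ne') t, neg_mul, ← sub_eq_add_neg, ← mul_sub]
  exact mul_nonneg hsin (sub_nonneg.mpr (hf hat (by simp only [mem_Ici]; linarith) (by linarith)))

theorem setIntegral_sin_mul_Ioi_nonneg {f : ℝ → ℝ} {l : ℝ} (hl : 0 < l) (n : ℕ)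
    (hf : AntitoneOn f (Ici (n * (2 * (π / l)))))
    (hfi : IntegrableOn (fun t => sin (l * t) * f t) (Ioi (n * (2 * (π / l))))) :
    0 ≤ ∫ t in Ioi (n * (2 * (π / l))), sin (l * t) * f t := by
  set p := 2 * (π / l)
  have hp : 0 < p := by positivity
  set a : ℕ → ℝ := fun m => ((m + n : ℕ) : ℝ) * p
  have ha0 : a 0 = n * p := by simp [a]
  have ha_mono : Monotone a := fun i j hij => by simp only [a]; gcongr
  have hperiod : ∀ m, IntervalIntegrable (fun t => sin (l * t) * f t) volume (a m) (a (m + 1)) :=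
    fun m => (intervalIntegrable_iff_integrableOn_Ioc_of_le (ha_mono m.le_succ)).mpr
      (hfi.mono_set fun t ht => ha0 ▸ (ha_mono m.zero_le).trans_lt ht.1)
  have hpartial : ∀ m, 0 ≤ ∫ t in a 0..a m, sin (l * t) * f t := fun m => by
    rw [← intervalIntegral.sum_integral_adjacent_intervals fun i _ => hperiod i]
    refine Finset.sum_nonneg fun i _ => ?_
    have hnext : a (i + 1) = a i + p := by simp only [a]; push_cast; ring
    rw [hnext]
    exact integral_sin_mul_period_nonneg_s12 hl (i + n)
      (hf.mono (Ici_subset_Ici.mpr (ha0 ▸ ha_mono i.zero_le))) (hnext ▸ hperiod i)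
  have ha_top : Tendsto a atTop atTop :=
    (tendsto_natCast_atTop_atTop.comp (tendsto_add_atTop_nat n)).atTop_mul_const hp
  rw [← ha0] at hfi ⊢
  exact ge_of_tendsto' (intervalIntegral_tendsto_integral_Ioi (a 0) hfi ha_top) hpartial

theorem rpow_mul_integral_le_integral_sin_mul {f : ℝ → ℝ} {l k Km Kp : ℝ} (hl : 0 < l)
    (hlow : ∀ s, 0 < s → s < π / l → Km * s ^ k ≤ f s)
    (hhigh : ∀ s, π / l < s → s < 2 * (π / l) → f s ≤ Kp * s ^ k)
    (hG : IntegrableOn (fun u => sin (π * u) * (Km * u ^ k - Kp * (u + 1) ^ k)) (Ioo 0 1))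
    (hfi : IntervalIntegrable (fun t => sin (l * t) * f t) volume 0 (2 * (π / l))) :
    (π / l) ^ (1 + k) * ∫ u in Ioo 0 1, sin (π * u) * (Km * u ^ k - Kp * (u + 1) ^ k) ≤
      ∫ t in 0..2 * (π / l), sin (l * t) * f t := by
  set h := π / l
  have hh : 0 < h := div_pos pi_pos hl
  have hlh : l * h = π := mul_div_cancel₀ π hl.ne'
  set P : ℝ → ℝ := fun t => sin (l * t) * (f t - f (t + h))
  have hP : ∀ t, sin (l * t) * f t + sin (l * (t + h)) * f (t + h) = P t := fun t => by
    simp only [P, sin_mul_add_of_mul_eq_pi hlh]; ring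
  have hPi : IntervalIntegrable P volume 0 h := by
    have h₁ : IntervalIntegrable (fun t => sin (l * t) * f t) volume 0 h :=
      hfi.mono_set (uIcc_subset_uIcc_left (mem_uIcc_of_le hh.le (by linarith)))
    have h₂ : IntervalIntegrable (fun t => sin (l * t) * f t) volume h (2 * h) :=
      hfi.mono_set (uIcc_subset_uIcc_right (mem_uIcc_of_le hh.le (by linarith)))
    have h₂' := h₂.comp_add_right h
    rw [sub_self, two_mul, add_sub_cancel_right] at h₂'
    simpa only [hP] using h₁.add h₂'
  have hpair : ∫ t in 0..2 * h, sin (l * t) * f t = ∫ t in 0..h, P t := by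
    have := intervalIntegral.integral_eq_integral_add_comp_add_right (a := 0) hh.le
      (by rwa [zero_add])
    rw [zero_add, zero_add] at this
    exact this.trans (intervalIntegral.integral_congr fun t _ => hP t)
  have hscale := intervalIntegral.smul_integral_comp_mul_left P h (a := 0) (b := 1)
  rw [mul_zero, mul_one, intervalIntegral.integral_of_le zero_le_one,
    integral_Ioc_eq_integral_Ioo, smul_eq_mul] at hscale
  have hPu : IntegrableOn (fun u => P (h * u)) (Ioo 0 1) := by
    have := hPi.comp_mul_left (c := h)
    rwa [zero_div, div_self hh.ne',
      intervalIntegrable_iff_integrableOn_Ioo_of_le zero_le_one] at this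
  rw [hpair, ← hscale, rpow_add hh, rpow_one, mul_assoc, ← integral_const_mul]
  refine mul_le_mul_of_nonneg_left (setIntegral_mono_on (hG.const_mul _) hPu measurableSet_Ioo
    fun u ⟨hu₀, hu₁⟩ => ?_) hh.le
  have hhu : h * u < h := mul_lt_of_lt_one_right hh hu₁
  have hhu₀ : 0 < h * u := mul_pos hh hu₀
  have harg : l * (h * u) = π * u := by rw [← mul_assoc, hlh]
  calc h ^ k * (sin (π * u) * (Km * u ^ k - Kp * (u + 1) ^ k))
      = sin (π * u) * (Km * (h * u) ^ k - Kp * (h * u + h) ^ k) := by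
        rw [mul_rpow hh.le hu₀.le, show h * u + h = h * (u + 1) by ring,
          mul_rpow hh.le (by linarith)]
        ring
    _ ≤ P (h * u) := by
        simp only [P, harg]
        refine mul_le_mul_of_nonneg_left (sub_le_sub (hlow _ hhu₀ hhu)
          (hhigh _ (by linarith) (by linarith))) ?_
        exact sin_nonneg_of_nonneg_of_le_pi (by positivity) (by nlinarith [pi_pos])

theorem rpow_mul_integral_le_setIntegral_sin_mul {f : ℝ → ℝ} {l b k Km Kp : ℝ} (hl : 0 < l)
    (hf : AntitoneOn f (Ioi 0)) (hfi : IntegrableOn (fun s => min s 1 * f s) (Ioi 0))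
    (hb : 2 * (π / l) ≤ b) (hlow : ∀ s, 0 < s → s < b → Km * s ^ k ≤ f s)
    (hhigh : ∀ s, 0 < s → s < b → f s ≤ Kp * s ^ k)
    (hG : IntegrableOn (fun u => sin (π * u) * (Km * u ^ k - Kp * (u + 1) ^ k)) (Ioo 0 1)) :
    (π / l) ^ (1 + k) * ∫ u in Ioo 0 1, sin (π * u) * (Km * u ^ k - Kp * (u + 1) ^ k) ≤
      ∫ t in Ioi 0, sin (l * t) * f t := by
  have hF := integrableOn_sin_mul_of_integrableOn_min_mul_s12 l hfi
  have hp : 0 < 2 * (π / l) := by positivity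
  have hhead := rpow_mul_integral_le_integral_sin_mul hl
    (fun s hs hs' => hlow s hs (by linarith))
    (fun s hs hs' => hhigh s (by linarith) (by linarith)) hG
    ((intervalIntegrable_iff_integrableOn_Ioc_of_le hp.le).mpr (hF.mono_set Ioc_subset_Ioi_self))
  have htail := setIntegral_sin_mul_Ioi_nonneg hl 1
    (by simpa using hf.mono (Ici_subset_Ioi.mpr hp))
    (by simpa using hF.mono_set (Ioi_subset_Ioi hp.le))
  rw [Nat.cast_one, one_mul] at htail
  rw [← intervalIntegral.integral_interval_add_Ioi hF (hF.mono_set (Ioi_subset_Ioi hp.le))]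
  linarith

theorem setIntegral_Ioi_sin_mul_comp_div (f : ℝ → ℝ) (ω : ℝ) {ε : ℝ} (hε : 0 < ε) :
    ∫ t in Ioi 0, sin (ω * t) * f (t / ε) = ε * ∫ s in Ioi 0, sin (ω * ε * s) * f s := by
  have h := integral_comp_mul_left_Ioi (fun s => sin (ω * ε * s) * f s) 0 (inv_pos.mpr hε)
  rw [mul_zero, inv_inv, smul_eq_mul] at h
  rw [← h]
  congr with t
  rw [inv_mul_eq_div]
  field_simp

theorem two_div_mul_inv_rpow_mul {α c k ε ξ : ℝ} (hε : 0 < ε) (hξ : 0 < ξ) :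
    2 / (ε * α) * ((2 * ξ * ε)⁻¹ ^ (1 + k) * c) =
      c * 2 ^ (-k) / α * ε ^ (-2 - k) * ξ ^ (-1 - k) := by
  have hε' : ε ^ (-2 - k) = (ε ^ (1 + k) * ε)⁻¹ := by
    rw [← rpow_add_one hε.ne', ← rpow_neg hε.le]; ring_nf
  have hξ' : ξ ^ (-1 - k) = (ξ ^ (1 + k))⁻¹ := by rw [← rpow_neg hξ.le]; ring_nf
  have h2 : (2:ℝ) ^ (-k) = 2 / 2 ^ (1 + k) := by
    rw [rpow_add two_pos, rpow_one, rpow_neg zero_le_two]; field_simp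
  rw [hε', hξ', h2, inv_rpow (by positivity), mul_rpow (by positivity) hε.le,
    mul_rpow zero_le_two hξ.le]
  field_simp

theorem stmt_12_general (β : ℝ → ℝ)
    (hmono : ∀ s t, 0 < s → s ≤ t → β t ≤ β s)
    (hint : IntegrableOn (fun s => min s 1 * β s) (Set.Ioi 0))
    (α₁ : ℝ) (hα₁pos : 0 < α₁)
    (b k Km Kp : ℝ) (hb : 0 < b)
    (hlow : ∀ s, 0 < s → s < b → Km * s ^ k ≤ β s)
    (hhigh : ∀ s, 0 < s → s < b → β s ≤ Kp * s ^ k)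
    (c : ℝ)
    (hc : c = ∫ u in Set.Ioo (0:ℝ) 1, Real.sin (π * u) * (Km * u ^ k - Kp * (u + 1) ^ k))
    (hcpos : 0 < c)
    (C' : ℝ) (hC' : C' = c * (2:ℝ) ^ (-k) / α₁)
    (S : ℝ → ℝ → ℝ)
    (hS : ∀ ε ξ, S ε ξ =
      2 * ∫ t in Set.Ioi (0:ℝ), Real.sin (2 * π * ξ * t) * (β (t / ε) / (ε ^ 2 * α₁)))
    (ε : ℝ) (hε : 0 < ε) (ξ : ℝ) (hξ : 1 / (ε * b) ≤ ξ) :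
    C' * ε ^ (-2 - k) * ξ ^ (-1 - k) ≤ S ε ξ ∧
    0 < C' * ε ^ (-2 - k) * ξ ^ (-1 - k) := by
  have hξ₀ : 0 < ξ := lt_of_lt_of_le (by positivity) hξ
  have hS' : S ε ξ = 2 / (ε * α₁) * ∫ s in Ioi 0, sin (2 * π * ξ * ε * s) * β s := by
    simp only [hS, mul_div_assoc', integral_div, setIntegral_Ioi_sin_mul_comp_div β _ hε]
    field_simp
  have hhalf : π / (2 * π * ξ * ε) = (2 * ξ * ε)⁻¹ := by field_simp
  have hperiod : 2 * (π / (2 * π * ξ * ε)) ≤ b := by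
    rw [div_le_iff₀ (by positivity)] at hξ
    rw [hhalf, ← div_eq_mul_inv, div_le_iff₀ (by positivity)]
    nlinarith
  -- `c ≠ 0`, and the Bochner integral of a non-integrable function is `0`
  have hG := Integrable.of_integral_ne_zero (hc ▸ hcpos.ne')
  have hI := rpow_mul_integral_le_setIntegral_sin_mul (by positivity)
    (fun s hs t _ hst => hmono s t hs hst) hint hperiod hlow hhigh hG
  rw [← hc, hhalf] at hI
  have hpos : 0 < C' * ε ^ (-2 - k) * ξ ^ (-1 - k) := by rw [hC']; positivity
  refine ⟨?_, hpos⟩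
  rw [hS', hC', ← two_div_mul_inv_rpow_mul hε hξ₀]
  exact mul_le_mul_of_nonneg_left hI (by positivity)

/-- far-field lower bound for the Fourier-sine symbol, singular
kernel case `K₋ s^k ≤ β(s) ≤ K₊ s^k` near zero with `k ∈ (-2,0)`. -/
theorem stmt_12 (β : ℝ → ℝ) (hnn : ∀ s, 0 < s → 0 ≤ β s)
    (hmono : ∀ s t, 0 < s → s ≤ t → β t ≤ β s)
    (hint : IntegrableOn (fun s => min s 1 * β s) (Set.Ioi 0))
    (α₁ : ℝ) (hα₁ : α₁ = 2 * ∫ s in Set.Ioi (0:ℝ), s * β s) (hα₁pos : 0 < α₁)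
    (b k Km Kp : ℝ) (hb : 0 < b) (hkl : -2 < k) (hku : k < 0)
    (hKm : 0 < Km) (hKp : 0 < Kp)
    (hlow : ∀ s, 0 < s → s < b → Km * s ^ k ≤ β s)
    (hhigh : ∀ s, 0 < s → s < b → β s ≤ Kp * s ^ k)
    (c : ℝ)
    (hc : c = ∫ u in Set.Ioo (0:ℝ) 1, Real.sin (π * u) * (Km * u ^ k - Kp * (u + 1) ^ k))
    (hcpos : 0 < c)
    (C' : ℝ) (hC' : C' = c * (2:ℝ) ^ (-k) / α₁)
    (S : ℝ → ℝ → ℝ)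
    (hS : ∀ ε ξ, S ε ξ =
      2 * ∫ t in Set.Ioi (0:ℝ), Real.sin (2 * π * ξ * t) * (β (t / ε) / (ε ^ 2 * α₁)))
    (ε : ℝ) (hε : 0 < ε) (ξ : ℝ) (hξ : 1 / (ε * b) ≤ ξ) :
    C' * ε ^ (-2 - k) * ξ ^ (-1 - k) ≤ S ε ξ ∧
    0 < C' * ε ^ (-2 - k) * ξ ^ (-1 - k) :=
  stmt_12_general β hmono hint α₁ hα₁pos b k Km Kp hb hlow hhigh c hc hcpos C' hC' S hS ε hε ξ hξ
end

section
/- Let α(s) = sgn(s)·β(|s|) with β : (0,∞) → [0,∞) measurable, and assume α₁ = 2∫₀^∞ s·β(s) ds and α₃ = 2∫₀^∞ s³·β(s) ds are finite with α₁ > 0. Then for every fixed ξ ∈ ℝ, S_ε(ξ) → 2πξ as ε → 0⁺. (Pointwise convergence of the Fourier symbol of the nonlocal derivative to the symbol 2πξ of d/dt.) -/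
open MeasureTheory Real Set Filter

/-
Substituting `t = ε s` turns `S_ε(ξ)` into `(2c/α₁) ∫₀^∞ sinc(c ε s) · s β(s) ds` with `c = 2πξ`.
Since `|sinc| ≤ 1`, the integrand is dominated by `|s β(s)|`, which is integrable because `α₁` is
finite; as `sinc` is continuous with `sinc 0 = 1`, dominated convergence gives the limit
`(2c/α₁) ∫₀^∞ s β(s) ds = c`.
-/

lemma Real.mul_sinc (x : ℝ) : x * sinc x = sin x := by
  rcases eq_or_ne x 0 with rfl | hx
  · simp
  · rw [sinc_of_ne_zero hx, mul_div_cancel₀ _ hx]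

lemma tendsto_integral_sinc_mul {μ : Measure ℝ} {g : ℝ → ℝ} (hg : Integrable g μ) (c : ℝ) :
    Tendsto (fun ε => ∫ s, sinc (c * ε * s) * g s ∂μ) (nhds 0) (nhds (∫ s, g s ∂μ)) := by
  refine tendsto_integral_filter_of_dominated_convergence (fun s => ‖g s‖) ?_ ?_ hg.norm ?_
  · exact .of_forall fun ε =>
      (continuous_sinc.comp (by fun_prop)).aestronglyMeasurable.mul hg.aestronglyMeasurable
  · refine .of_forall fun ε => .of_forall fun s => ?_
    rw [norm_mul]
    exact mul_le_of_le_one_left (norm_nonneg _) (abs_sinc_le_one _)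
  · refine .of_forall fun s => ?_
    have hsinc : Tendsto (fun ε => sinc (c * ε * s)) (nhds 0) (nhds 1) := by
      simpa [Function.comp_def] using
        (continuous_sinc.comp (by fun_prop : Continuous fun ε : ℝ => c * ε * s)).tendsto 0
    simpa using hsinc.mul_const (g s)

lemma integral_Ioi_sin_mul_comp_div (β : ℝ → ℝ) (c : ℝ) {ε : ℝ} (hε : 0 < ε) :
    ∫ t in Ioi (0 : ℝ), sin (c * t) * β (t / ε) =
      c * ε ^ 2 * ∫ s in Ioi (0 : ℝ), sinc (c * ε * s) * (s * β s) := by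
  have hsub := integral_comp_mul_left_Ioi (fun t => sin (c * t) * β (t / ε)) 0 hε
  rw [mul_zero, smul_eq_mul] at hsub
  rw [← mul_inv_cancel_left₀ hε.ne' (∫ t in Ioi (0 : ℝ), sin (c * t) * β (t / ε)), ← hsub,
    ← integral_const_mul, ← integral_const_mul]
  congr 1 with s
  rw [mul_div_cancel_left₀ s hε.ne', ← mul_sinc, mul_assoc c ε s]
  ring

theorem stmt_14_general (β : ℝ → ℝ)
    (hint1 : IntegrableOn (fun s => s * β s) (Set.Ioi 0))
    (α₁ : ℝ) (hα₁ : α₁ = 2 * ∫ s in Set.Ioi (0:ℝ), s * β s) (hα₁pos : 0 < α₁)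
    (ξ : ℝ) :
    Tendsto (fun ε : ℝ =>
        2 * ∫ t in Set.Ioi (0:ℝ), Real.sin (2 * π * ξ * t) * (β (t / ε) / (ε ^ 2 * α₁)))
      (nhdsWithin 0 (Set.Ioi 0)) (nhds (2 * π * ξ)) := by
  set c := 2 * π * ξ
  have hlim := ((tendsto_integral_sinc_mul hint1 c).mono_left
    (nhdsWithin_le_nhds (s := Ioi 0))).const_mul (2 * c / α₁)
  have hval : 2 * c / α₁ * ∫ s in Ioi (0 : ℝ), s * β s = c := by
    rw [mul_comm 2 c, mul_div_right_comm, mul_assoc, ← hα₁, div_mul_cancel₀ c hα₁pos.ne']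
  rw [hval] at hlim
  refine hlim.congr' ?_
  filter_upwards [self_mem_nhdsWithin] with ε (hε : 0 < ε)
  simp_rw [← mul_div_assoc, integral_div, integral_Ioi_sin_mul_comp_div β c hε]
  field_simp

/-- pointwise convergence of the Fourier-sine symbol of the
nonlocal derivative to the symbol `2πξ` of `d/dt` as `ε → 0⁺`. -/
theorem stmt_14 (β : ℝ → ℝ) (hβmeas : Measurable β) (hnn : ∀ s, 0 < s → 0 ≤ β s)
    (hint1 : IntegrableOn (fun s => s * β s) (Set.Ioi 0))
    (hint3 : IntegrableOn (fun s => s ^ 3 * β s) (Set.Ioi 0))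
    (α₁ : ℝ) (hα₁ : α₁ = 2 * ∫ s in Set.Ioi (0:ℝ), s * β s) (hα₁pos : 0 < α₁)
    (ξ : ℝ) :
    Tendsto (fun ε : ℝ =>
        2 * ∫ t in Set.Ioi (0:ℝ), Real.sin (2 * π * ξ * t) * (β (t / ε) / (ε ^ 2 * α₁)))
      (nhdsWithin 0 (Set.Ioi 0)) (nhds (2 * π * ξ)) :=
  stmt_14_general β hint1 α₁ hα₁ hα₁pos ξ
end
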